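/- arXiv:1612.00097 — 9 statements merged into one kernel-verified Lean document; each statement's English description precedes it below -/
import Mathlib

section
/- Let n ≥ 1, let 0 ≤ k ≤ n, and let f be an affine permutation of quasi-period n. Then the following are equivalent: (i) there exists m ∈ ℤ such that the bijection g : ℤ → ℤ defined by g(i) = f(i) − m satisfies i ≤ g(i) ≤ i + n for all i ∈ ℤ and #{i ∈ {1,…,n} : g(i) > n} = k; (ii) c_i(f) ≤ n − k and c_i(f⁻¹) ≤ k for all i ∈ ℤ. -/
/-!
For a bounded bijection `g` (`i ≤ g i ≤ i + n`), the number of `j ≤ x` with `x < g j` does not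
depend on `x`, and at `x = n` it is the count `k` of the statement. Row `i` of the Rothe diagram
and this crossing set at `x = i + n` are disjoint subsets of `(i, i + n]`, and the column through
`g p` lies in the crossing set at `p`; this gives (i) ⇒ (ii), with equality when `g i = i + n`,
resp. `g p = p`.

Conversely, the periodic displacement `f i - i` has a maximum `s` at some `a` and a minimum `t`
at some `b ∈ (a, a + n]`. If `f b < f a`, every value in `[f b, f a)` and every position in
`[a, b)` yields a cell in row `a` or in the column through `f b`, and those counted twice yield a
cell in both, so `s - t ≤ c_a(f) + c_{f b}(f⁻¹) ≤ n`. Hence `f - m` is bounded for every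
`m ∈ [s - n, t]`; by the equality cases its count is `≤ k` at `m = t` and `≥ k` at `m = s - n`,
and it drops by at most one when `m` grows by one, so it equals `k` in between.
-/

open Function Set

lemma Set.ncard_Ioc_int (a b : ℤ) : (Ioc a b).ncard = (b - a).toNat := by
  rw [← Finset.coe_Ioc, ncard_coe_finset, Int.card_Ioc]

lemma Set.ncard_Ico_int (a b : ℤ) : (Ico a b).ncard = (b - a).toNat := by
  rw [← Finset.coe_Ico, ncard_coe_finset, Int.card_Ico]

lemma Function.Periodic.exists_forall_le {α : Type*} [LinearOrder α] {d : ℤ → α} {c : ℤ}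
    (hd : Periodic d c) (hc : 0 < c) : ∃ a, ∀ i, d i ≤ d a := by
  obtain ⟨a, -, ha⟩ := exists_max_image (Ioc 0 c) d (finite_Ioc 0 c) (nonempty_Ioc.2 hc)
  refine ⟨a, fun i => ?_⟩
  obtain ⟨j, hj, hij⟩ := hd.exists_mem_Ioc hc i 0
  exact hij ▸ ha j (by simpa using hj)

lemma Int.exists_eq_of_le_add_one {h : ℤ → ℕ} (hstep : ∀ z, h z ≤ h (z + 1) + 1) {x y : ℤ}
    {k : ℕ} (hxy : x ≤ y) (hx : k ≤ h x) (hy : h y ≤ k) : ∃ m ∈ Icc x y, h m = k := by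
  induction y, hxy using Int.leInduction with
  | base => exact ⟨x, left_mem_Icc.2 le_rfl, le_antisymm hy hx⟩
  | succ y hxy ih =>
    by_cases hyk : h y ≤ k
    · obtain ⟨m, hm, hmk⟩ := ih hyk
      exact ⟨m, Icc_subset_Icc_right (by omega) hm, hmk⟩
    · exact ⟨y + 1, ⟨by omega, le_rfl⟩, by have := hstep y; omega⟩

namespace AffinePerm

def IsBounded (n : ℕ) (g : ℤ → ℤ) : Prop := ∀ i, i ≤ g i ∧ g i ≤ i + n

noncomputable def windowCount (n : ℕ) (g : ℤ → ℤ) : ℕ :=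
  ((Finset.Icc (1 : ℤ) n).filter fun i => (n : ℤ) < g i).card

def rotheRow (f : ℤ → ℤ) (i : ℤ) : Set ℤ := {j | i < j ∧ f j < f i}

/-- The column of the Rothe diagram through `f p`, indexed by rows; its size is `c_{f p}(f⁻¹)`. -/
def rotheCol (f : ℤ → ℤ) (p : ℤ) : Set ℤ := {u | u < p ∧ f p < f u}

def crossing (g : ℤ → ℤ) (x : ℤ) : Set ℤ := {j | j ≤ x ∧ x < g j}

section Bounded

variable {n : ℕ} {g : ℤ → ℤ}

lemma crossing_subset_Ioc (hg : ∀ j, g j ≤ j + n) (x : ℤ) : crossing g x ⊆ Ioc (x - n) x :=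
  fun j ⟨hjx, hxj⟩ => ⟨by linarith [hg j], hjx⟩

lemma crossing_finite (hg : ∀ j, g j ≤ j + n) (x : ℤ) : (crossing g x).Finite :=
  (finite_Ioc _ _).subset (crossing_subset_Ioc hg x)

lemma windowCount_eq_ncard_crossing (hg : ∀ j, g j ≤ j + n) :
    windowCount n g = (crossing g n).ncard := by
  rw [windowCount, ← ncard_coe_finset]
  congr 1
  ext j
  simp only [Finset.coe_filter, Finset.mem_Icc, mem_ofPred_eq, crossing]
  have := hg j
  omega

lemma ncard_crossing_add_one (hg : IsBounded n g) (hbij : Bijective g) (x : ℤ) :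
    (crossing g (x + 1)).ncard = (crossing g x).ncard := by
  obtain ⟨w, hw⟩ := hbij.2 (x + 1)
  have hfin := crossing_finite (fun j => (hg j).2)
  have hx : insert (x + 1) (crossing g x) = {j | j ≤ x + 1 ∧ x < g j} := by
    ext j
    simp only [crossing, mem_insert_iff, mem_ofPred_eq]
    have := (hg j).1
    omega
  have hw' : insert w (crossing g (x + 1)) = {j | j ≤ x + 1 ∧ x < g j} := by
    ext j
    simp only [crossing, mem_insert_iff, mem_ofPred_eq]
    have := (hg j).1
    have hpre : g j = x + 1 → j = w := fun h => hbij.1 (h.trans hw.symm)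
    constructor
    · rintro (rfl | h) <;> omega
    · intro h
      by_cases hj : g j = x + 1
      · exact Or.inl (hpre hj)
      · right; omega
  have h1 := ncard_insert_of_notMem (a := x + 1) (s := crossing g x)
    (fun h => by simp [crossing] at h) (hfin x)
  have h2 := ncard_insert_of_notMem (a := w) (s := crossing g (x + 1))
    (fun h => by simp [crossing, hw] at h) (hfin (x + 1))
  rw [hx] at h1
  rw [hw'] at h2
  omega

lemma ncard_crossing_eq (hg : IsBounded n g) (hbij : Bijective g) (x y : ℤ) :
    (crossing g x).ncard = (crossing g y).ncard := by
  suffices h : ∀ x, (crossing g x).ncard = (crossing g 0).ncard by rw [h x, h y]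
  intro x
  induction x using Int.induction_on with
  | zero => rfl
  | succ x ih => rw [ncard_crossing_add_one hg hbij, ih]
  | pred x ih => rw [← ih, ← ncard_crossing_add_one hg hbij, sub_add_cancel]

lemma windowCount_eq (hg : IsBounded n g) (hbij : Bijective g) (x : ℤ) :
    windowCount n g = (crossing g x).ncard := by
  rw [windowCount_eq_ncard_crossing fun j => (hg j).2, ncard_crossing_eq hg hbij]

lemma rotheRow_union_crossing_subset (hg : IsBounded n g) (i : ℤ) :
    rotheRow g i ∪ crossing g (i + n) ⊆ Ioc i (i + n) := by
  rintro j (⟨hij, hj⟩ | hj)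
  · exact ⟨hij, by linarith [(hg j).1, (hg i).2]⟩
  · simpa using crossing_subset_Ioc (fun j => (hg j).2) _ hj

lemma disjoint_rotheRow_crossing (hg : IsBounded n g) (i : ℤ) :
    Disjoint (rotheRow g i) (crossing g (i + n)) :=
  disjoint_left.2 fun _ ⟨_, hj⟩ ⟨_, hj'⟩ => by linarith [(hg i).2]

lemma ncard_rotheRow_add_ncard_crossing_le (hg : IsBounded n g) (i : ℤ) :
    (rotheRow g i).ncard + (crossing g (i + n)).ncard ≤ n := by
  have hfin := (finite_Ioc i (i + n)).subset (rotheRow_union_crossing_subset hg i)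
  rw [← ncard_union_eq (disjoint_rotheRow_crossing hg i) (hfin.subset subset_union_left)
    (hfin.subset subset_union_right)]
  simpa [ncard_Ioc_int] using ncard_le_ncard (rotheRow_union_crossing_subset hg i)

lemma ncard_rotheRow_add_ncard_crossing_eq (hg : IsBounded n g) (hinj : Injective g) {i : ℤ}
    (hi : g i = i + n) : (rotheRow g i).ncard + (crossing g (i + n)).ncard = n := by
  have hunion : rotheRow g i ∪ crossing g (i + n) = Ioc i (i + n) := by
    refine (rotheRow_union_crossing_subset hg i).antisymm fun j ⟨hij, hjn⟩ => ?_
    have hne : g j ≠ g i := fun h => (hinj h ▸ hij).false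
    rcases hne.lt_or_gt with h | h
    · exact Or.inl ⟨hij, h⟩
    · exact Or.inr ⟨hjn, hi ▸ h⟩
  have hfin : (rotheRow g i ∪ crossing g (i + n)).Finite := hunion ▸ finite_Ioc _ _
  rw [← ncard_union_eq (disjoint_rotheRow_crossing hg i) (hfin.subset subset_union_left)
    (hfin.subset subset_union_right), hunion, ncard_Ioc_int]
  omega

lemma rotheCol_subset_crossing (hg : ∀ j, j ≤ g j) (p : ℤ) : rotheCol g p ⊆ crossing g p :=
  fun _ ⟨hup, hu⟩ => ⟨hup.le, (hg p).trans_lt hu⟩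

lemma rotheCol_eq_crossing {p : ℤ} (hp : g p = p) : rotheCol g p = crossing g p := by
  ext u
  simp only [rotheCol, crossing, mem_ofPred_eq, hp]
  constructor
  · exact fun ⟨hup, hu⟩ => ⟨hup.le, hu⟩
  · exact fun ⟨hup, hu⟩ => ⟨hup.lt_of_ne (by rintro rfl; simp [hp] at hu), hu⟩

lemma ncard_rotheRow_le_sub_windowCount (hg : IsBounded n g) (hbij : Bijective g) (i : ℤ) :
    (rotheRow g i).ncard ≤ n - windowCount n g := by
  have := ncard_rotheRow_add_ncard_crossing_le hg i
  rw [windowCount_eq hg hbij (i + n)]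
  omega

lemma ncard_rotheCol_le_windowCount (hg : IsBounded n g) (hbij : Bijective g) (p : ℤ) :
    (rotheCol g p).ncard ≤ windowCount n g := by
  rw [windowCount_eq hg hbij p]
  exact ncard_le_ncard (rotheCol_subset_crossing (fun j => (hg j).1) p)
    (crossing_finite (fun j => (hg j).2) p)

end Bounded

lemma rotheRow_sub_const (f : ℤ → ℤ) (m i : ℤ) :
    rotheRow (fun j => f j - m) i = rotheRow f i := by
  simp [rotheRow]

lemma rotheCol_sub_const (f : ℤ → ℤ) (m p : ℤ) :
    rotheCol (fun j => f j - m) p = rotheCol f p := by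
  simp [rotheCol]

lemma rotheRow_symm_apply (f : ℤ ≃ ℤ) (p : ℤ) : rotheRow f.symm (f p) = f '' rotheCol f p := by
  ext j
  constructor
  · rintro ⟨h1, h2⟩
    exact ⟨f.symm j, ⟨by simpa using h2, by simpa using h1⟩, by simp⟩
  · rintro ⟨u, ⟨h1, h2⟩, rfl⟩
    exact ⟨h2, by simpa using h1⟩

lemma ncard_rotheRow_symm_apply (f : ℤ ≃ ℤ) (p : ℤ) :
    (rotheRow f.symm (f p)).ncard = (rotheCol f p).ncard := by
  rw [rotheRow_symm_apply, ncard_image_of_injective _ f.injective]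

lemma rotheRow_finite {f : ℤ → ℤ} {t : ℤ} (ht : ∀ j, t ≤ f j - j) (i : ℤ) :
    (rotheRow f i).Finite :=
  (finite_Ioo i (f i - t)).subset fun j ⟨hij, hj⟩ => ⟨hij, by linarith [ht j]⟩

lemma rotheCol_finite {f : ℤ → ℤ} {s : ℤ} (hs : ∀ j, f j - j ≤ s) (p : ℤ) :
    (rotheCol f p).Finite :=
  (finite_Ioo (f p - s) p).subset fun u ⟨hup, hu⟩ => ⟨by linarith [hs u], hup⟩

lemma sub_le_ncard_rotheRow_add_ncard_rotheCol (f : ℤ ≃ ℤ) {a b : ℤ} (hab : a < b)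
    (hf : f b < f a) (hR : (rotheRow f a).Finite) (hC : (rotheCol f b).Finite) :
    (f a - a) - (f b - b) ≤ (rotheRow f a).ncard + (rotheCol f b).ncard := by
  set V := f ⁻¹' Ico (f b) (f a)
  set P := Ico a b
  have hV : V.ncard = (f a - f b).toNat := by
    rw [ncard_preimage_of_injective_subset_range f.injective (by simp), ncard_Ico_int]
  have hP : P.ncard = (b - a).toNat := ncard_Ico_int a b
  have hVfin : V.Finite := (finite_Ico _ _).preimage f.injective.injOn
  have hunion : V ∪ P ⊆ rotheRow f a ∪ rotheCol f b := by
    rintro j (⟨hj1, hj2⟩ | ⟨hj1, hj2⟩)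
    · rcases lt_or_ge a j with h | h
      · exact Or.inl ⟨h, hj2⟩
      · refine Or.inr ⟨by omega, hj1.lt_of_ne fun he => ?_⟩
        rw [← f.injective he] at h
        omega
    · rcases lt_or_ge (f j) (f b) with h | h
      · exact Or.inl ⟨hj1.lt_of_ne (by rintro rfl; omega), by omega⟩
      · exact Or.inr ⟨hj2, h.lt_of_ne fun he => by rw [f.injective he] at hj2; omega⟩
  have hinter : V ∩ P ⊆ rotheRow f a ∩ rotheCol f b := by
    rintro j ⟨⟨hj1, hj2⟩, hj3, hj4⟩
    have hja : a ≠ j := by rintro rfl; omega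
    have hjb : f b ≠ f j := fun he => by rw [f.injective he] at hj4; omega
    exact ⟨⟨hj3.lt_of_ne hja, hj2⟩, hj4, hj1.lt_of_ne hjb⟩
  have key : V.ncard + P.ncard ≤ (rotheRow f a).ncard + (rotheCol f b).ncard := by
    rw [← ncard_union_add_ncard_inter _ _ hVfin (finite_Ico a b),
      ← ncard_union_add_ncard_inter _ _ hR hC]
    exact add_le_add (ncard_le_ncard hunion (hR.union hC))
      (ncard_le_ncard hinter (hR.inter_of_left _))
  omega

lemma windowCount_sub_le_add_one {f : ℤ → ℤ} (hf : Injective f) (n : ℕ) (m : ℤ) :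
    windowCount n (fun i => f i - m) ≤ windowCount n (fun i => f i - (m + 1)) + 1 := by
  simp only [windowCount]
  have hsub : ((Finset.Icc (1 : ℤ) n).filter fun i => (n : ℤ) < f i - m) ⊆
      ((Finset.Icc (1 : ℤ) n).filter fun i => (n : ℤ) < f i - (m + 1)) ∪
        (Finset.Icc (1 : ℤ) n).filter fun i => f i = n + m + 1 := by
    intro i hi
    simp only [Finset.mem_filter, Finset.mem_union] at hi ⊢
    by_cases h : f i = n + m + 1
    · exact Or.inr ⟨hi.1, h⟩
    · exact Or.inl ⟨hi.1, by omega⟩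
  have hle : ((Finset.Icc (1 : ℤ) n).filter fun i => f i = n + m + 1).card ≤ 1 :=
    Finset.card_le_one.2 fun i hi j hj => hf (by simp only [Finset.mem_filter] at hi hj; omega)
  have := (Finset.card_le_card hsub).trans (Finset.card_union_le _ _)
  omega

lemma displacement_sub_le (f : ℤ ≃ ℤ) {n k : ℕ} (hn : 0 < n) (hk : k ≤ n)
    (hd : Periodic (fun i => f i - i) n)
    (hrow : ∀ i, (rotheRow f i).ncard ≤ n - k) (hcol : ∀ p, (rotheCol f p).ncard ≤ k)
    {a b : ℤ} (ha : ∀ i, f i - i ≤ f a - a) (hb : ∀ i, f b - b ≤ f i - i) :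
    (f a - a) - (f b - b) ≤ n := by
  obtain ⟨b', ⟨hab, hbn⟩, hb'⟩ := hd.exists_mem_Ioc (by exact_mod_cast hn) b a
  rcases lt_or_ge (f b') (f a) with h | h
  · have := sub_le_ncard_rotheRow_add_ncard_rotheCol f hab h (rotheRow_finite hb a)
      (rotheCol_finite ha b')
    have := hrow a
    have := hcol b'
    omega
  · omega

lemma exists_isBounded_of_codes_le (f : ℤ ≃ ℤ) {n k : ℕ} (hn : 0 < n) (hk : k ≤ n)
    (hd : Periodic (fun i => f i - i) n)
    (hrow : ∀ i, (rotheRow f i).ncard ≤ n - k) (hcol : ∀ p, (rotheCol f p).ncard ≤ k) :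
    ∃ m, IsBounded n (fun i => f i - m) ∧ windowCount n (fun i => f i - m) = k := by
  obtain ⟨a, ha⟩ := hd.exists_forall_le (by exact_mod_cast hn)
  obtain ⟨b, hb⟩ := (hd.comp OrderDual.toDual).exists_forall_le (by exact_mod_cast hn)
  have hspread := displacement_sub_le f hn hk hd hrow hcol ha hb
  have hbdd : ∀ m ∈ Icc (f a - a - n) (f b - b), IsBounded n (fun i => f i - m) :=
    fun m ⟨h1, h2⟩ i => by
      have := ha i
      have : f b - b ≤ f i - i := hb i
      dsimp only
      constructor <;> omega
  have hbij (m : ℤ) : Bijective (fun i => f i - m) :=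
    (Equiv.subRight m).bijective.comp f.bijective
  have hlo : windowCount n (fun i => f i - (f b - b)) ≤ k := by
    rw [windowCount_eq (hbdd _ ⟨by omega, le_rfl⟩) (hbij _) b,
      ← rotheCol_eq_crossing (g := fun i => f i - (f b - b)) (sub_sub_cancel _ _),
      rotheCol_sub_const]
    exact hcol b
  have hhi : k ≤ windowCount n (fun i => f i - (f a - a - n)) := by
    have := ncard_rotheRow_add_ncard_crossing_eq (hbdd _ ⟨le_rfl, by omega⟩) (hbij _).1
      (g := fun i => f i - (f a - a - n)) (i := a) (by ring)
    rw [rotheRow_sub_const] at this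
    rw [windowCount_eq (hbdd _ ⟨le_rfl, by omega⟩) (hbij _) (a + n)]
    have := hrow a
    omega
  obtain ⟨m, hm, hmk⟩ := Int.exists_eq_of_le_add_one (windowCount_sub_le_add_one f.injective n)
    (by omega) hhi hlo
  exact ⟨m, hbdd m hm, hmk⟩

end AffinePerm

open AffinePerm

/-- For an affine permutation `f` of quasi-period `n` and `0 ≤ k ≤ n`:
`f` is an integer shift of a bounded affine permutation with exactly `k` of the
values `g 1, …, g n` exceeding `n`, if and only if every row of the Rothe diagram
has at most `n - k` cells (`cᵢ(f) ≤ n - k`) and every column has at most `k`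
cells (`cᵢ(f⁻¹) ≤ k`). -/
theorem stmt0 (n k : ℕ) (hn : 1 ≤ n) (hk : k ≤ n) (f : ℤ ≃ ℤ)
    (hf : ∀ i : ℤ, f (i + n) = f i + n) :
    (∃ m : ℤ, (∀ i : ℤ, i ≤ f i - m ∧ f i - m ≤ i + n) ∧
        ((Finset.Icc (1 : ℤ) n).filter fun i => (n : ℤ) < f i - m).card = k) ↔
      ∀ i : ℤ, {j : ℤ | i < j ∧ f j < f i}.ncard ≤ n - k ∧
        {j : ℤ | i < j ∧ f.symm j < f.symm i}.ncard ≤ k := by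
  constructor
  · rintro ⟨m, hbdd, hcount⟩ i
    have hbij : Bijective (fun i => f i - m) := (Equiv.subRight m).bijective.comp f.bijective
    change windowCount n (fun i => f i - m) = k at hcount
    refine ⟨?_, ?_⟩
    · have := ncard_rotheRow_le_sub_windowCount hbdd hbij i
      rwa [rotheRow_sub_const, hcount] at this
    · have := ncard_rotheCol_le_windowCount hbdd hbij (f.symm i)
      rwa [rotheCol_sub_const, hcount, ← ncard_rotheRow_symm_apply, f.apply_symm_apply] at this
  · intro H
    have hd : Periodic (fun i => f i - i) n := fun i => by simp only [hf]; ring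
    exact exists_isBounded_of_codes_le f hn hk hd (fun i => (H i).1)
      fun p => ncard_rotheRow_symm_apply f p ▸ (H (f p)).2
end

section
/- Let n ≥ 1 and let f be an affine permutation of quasi-period n such that i ≤ f(i) ≤ i + n for all i ∈ ℤ. Then Σ_{i=1}^n (f(i) − i) = n · #{i ∈ {1,…,n} : f(i) > n}. -/
/-- For a bounded affine permutation `f` of quasi-period `n`,
`∑_{i=1}^n (f i - i) = n · #{i ∈ [1,n] : f i > n}`. -/
theorem stmt5 (n : ℕ) (hn : 1 ≤ n) (f : ℤ ≃ ℤ)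
    (hf : ∀ i : ℤ, f (i + n) = f i + n)
    (hb : ∀ i : ℤ, i ≤ f i ∧ f i ≤ i + n) :
    ∑ i ∈ Finset.Icc (1 : ℤ) n, (f i - i) =
      (n : ℤ) * ((Finset.Icc (1 : ℤ) n).filter fun i => (n : ℤ) < f i).card := by
  set S := Finset.Icc (1 : ℤ) n with hS
  set g : ℤ → ℤ := fun i => if (n : ℤ) < f i then f i - n else f i with hg
  have hfsub : ∀ i : ℤ, f (i - n) = f i - n := by
    intro i
    have := hf (i - n)
    simp at this
    linarith
  have hmaps : ∀ i ∈ S, g i ∈ S := by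
    intro i hi
    simp only [hS, Finset.mem_Icc] at hi ⊢
    obtain ⟨h1, h2⟩ := hb i
    simp only [hg]
    split_ifs with h
    · constructor <;> linarith
    · constructor <;> linarith
  have hinj : Set.InjOn g S := by
    intro i hi j hj hij
    simp only [hS, Finset.coe_Icc, Set.mem_Icc] at hi hj
    simp only [hg] at hij
    split_ifs at hij with h1 h2 h2
    · have : f i = f j := by linarith
      exact f.injective this
    · have : f (i - n) = f j := by rw [hfsub]; linarith
      have := f.injective this
      omega
    · have : f i = f (j - n) := by rw [hfsub]; linarith
      have := f.injective this
      omega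
    · exact f.injective hij
  have himg : S.image g = S := by
    apply Finset.eq_of_subset_of_card_le
    · intro x hx
      obtain ⟨i, hi, rfl⟩ := Finset.mem_image.mp hx
      exact hmaps i hi
    · rw [Finset.card_image_of_injOn hinj]
  have hsumg : ∑ i ∈ S, g i = ∑ i ∈ S, i := by
    conv_rhs => rw [← himg]
    rw [Finset.sum_image (fun a ha b hb => hinj ha hb)]
  have key : ∀ i : ℤ, f i - g i = if (n : ℤ) < f i then (n : ℤ) else 0 := by
    intro i
    simp only [hg]
    split_ifs <;> ring
  calc ∑ i ∈ S, (f i - i) = ∑ i ∈ S, (f i - g i) := by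
        rw [Finset.sum_sub_distrib, Finset.sum_sub_distrib, hsumg]
    _ = ∑ i ∈ S, (if (n : ℤ) < f i then (n : ℤ) else 0) := by
        exact Finset.sum_congr rfl fun i _ => key i
    _ = ∑ i ∈ S.filter (fun i => (n : ℤ) < f i), (n : ℤ) := by
        rw [Finset.sum_filter]
    _ = (n : ℤ) * (S.filter fun i => (n : ℤ) < f i).card := by
        rw [Finset.sum_const, nsmul_eq_mul, mul_comm]
end

section
/- Let n ≥ 2, let f be an affine permutation of quasi-period n, let i ∈ ℤ, and let s_i be the affine permutation that interchanges i + pn and i + 1 + pn for all p ∈ ℤ and fixes all other integers. Then ℓ(f ∘ s_i) < ℓ(f) if and only if c_i(f) > c_{i+1}(f); and in that case, for every j ∈ ℤ, c_j(f ∘ s_i) = c_{s_i(j)}(f) − 1 if j ≡ i + 1 (mod n), and c_j(f ∘ s_i) = c_{s_i(j)}(f) otherwise. -/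
/-- The code of an affine permutation: `cᵢ(f) = #{j > i : f j < f i}`. -/
noncomputable def affineCode (g : ℤ → ℤ) (i : ℤ) : ℕ := {j : ℤ | i < j ∧ g j < g i}.ncard

/-- The length of an affine permutation of quasi-period `n`: the number of
inversions `(i,j)` with `1 ≤ i ≤ n`, `i < j`, `f i > f j`. -/
noncomputable def affineLen (n : ℕ) (g : ℤ → ℤ) : ℕ :=
  {p : ℤ × ℤ | 1 ≤ p.1 ∧ p.1 ≤ n ∧ p.1 < p.2 ∧ g p.2 < g p.1}.ncard

/-!
Composing with `sᵢ` only relabels positions. As `sᵢ` is an involution mapping every ray `(a, ∞)`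
with `a ≢ i (mod n)` onto itself, `c_j(f ∘ sᵢ)` counts the same set as `c_{sᵢ j}(f)`, except that
for `j ≡ i` or `j ≡ i + 1` one neighbour of `j` is counted on at most one side, depending on how
`f i` compares with `f (i + 1)`. Periodicity makes the length the sum of the codes over
any `n` consecutive positions, and summing over `i, …, i + n - 1` gives `ℓ(f ∘ sᵢ) = ℓ(f) ∓ 1`
according as `f (i + 1) < f i` or not. Likewise `c_{i+1}(f) < cᵢ(f)` exactly when
`f (i + 1) < f i`, so all three conditions coincide.
-/

open Finset in
theorem Function.Periodic.sum_range_int_add {M : Type*} [AddCancelCommMonoid M] {h : ℤ → M}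
    {n : ℕ} (hh : Function.Periodic h n) (a : ℤ) :
    ∑ k ∈ range n, h (a + k) = ∑ k ∈ range n, h k := by
  have step (a : ℤ) : ∑ k ∈ range n, h (a + 1 + k) = ∑ k ∈ range n, h (a + k) := by
    have := (sum_range_succ' (fun k : ℕ => h (a + k)) n).symm.trans
      (sum_range_succ (fun k : ℕ => h (a + k)) n)
    simp only [Nat.cast_add, Nat.cast_one, Nat.cast_zero, add_zero, hh a] at this
    simpa only [add_assoc, add_comm (1 : ℤ)] using add_right_cancel this
  induction a using Int.induction_on with
  | zero => simp
  | succ a ih => rw [step, ih]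
  | pred a ih => rw [← step, sub_add_cancel, ih]

theorem Function.Involutive.ncard_sep_comp {α : Type*} {s : α → α} (hs : s.Involutive)
    {A : Set α} (hA : Set.MapsTo s A A) (P : α → Prop) :
    {x ∈ A | P (s x)}.ncard = {x ∈ A | P x}.ncard := by
  rw [← Set.ncard_image_of_injective _ hs.injective, hs.image_eq_preimage_symm]
  congr 1
  ext y
  simp only [Set.mem_preimage, Set.mem_ofPred_eq, hs y]
  exact and_congr_left fun _ => ⟨fun h => hs y ▸ hA h, fun h => hA h⟩

theorem Int.ncard_setOf_lt_and_eq_add_ite {P : ℤ → Prop} [DecidablePred P] {a : ℤ}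
    (hfin : {m | a + 1 < m ∧ P m}.Finite) :
    {m | a < m ∧ P m}.ncard = {m | a + 1 < m ∧ P m}.ncard + if P (a + 1) then 1 else 0 := by
  split_ifs with h
  · rw [← Set.ncard_insert_of_notMem (fun h => lt_irrefl _ h.1) hfin]
    congr 1
    ext m
    simp only [Set.mem_ofPred_eq, Set.mem_insert_iff]
    constructor
    · rintro ⟨hm, hPm⟩
      rcases (show m = a + 1 ∨ a + 1 < m by omega) with rfl | hm'
      exacts [Or.inl rfl, Or.inr ⟨hm', hPm⟩]
    · rintro (rfl | ⟨hm, hPm⟩)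
      exacts [⟨by omega, h⟩, ⟨by omega, hPm⟩]
  · rw [add_zero]
    congr 1
    ext m
    simp only [Set.mem_ofPred_eq]
    refine ⟨fun ⟨hm, hPm⟩ => ⟨?_, hPm⟩, fun ⟨hm, hPm⟩ => ⟨by omega, hPm⟩⟩
    rcases (show m = a + 1 ∨ a + 1 < m by omega) with rfl | hm'
    exacts [absurd hPm h, hm']

section AddConst

variable {n : ℕ} {g : ℤ → ℤ}

theorem apply_add_mul_of_add_const (hg : ∀ x, g (x + n) = g x + n) (x p : ℤ) :
    g (x + p * n) = g x + p * n := by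
  simpa using
    AddConstMapClass.map_add_zsmul (AddConstMap.mk g hg : AddConstMap ℤ ℤ (n : ℤ) (n : ℤ)) x p

theorem apply_add_one_lt_iff_of_dvd_sub (hg : ∀ x, g (x + n) = g x + n) {i j : ℤ}
    (hij : (n : ℤ) ∣ j - i) : g (j + 1) < g j ↔ g (i + 1) < g i := by
  obtain ⟨p, hp⟩ := hij
  obtain rfl : j = i + p * n := by linarith
  rw [add_right_comm, apply_add_mul_of_add_const hg, apply_add_mul_of_add_const hg,
    add_lt_add_iff_right]

theorem finite_setOf_lt_and_apply_lt (hn : 0 < n) (hg : ∀ x, g (x + n) = g x + n) (a v : ℤ) :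
    {m | a < m ∧ g m < v}.Finite := by
  -- `g m - m` depends only on `m % n`, so it takes finitely many values.
  have hdisp : Set.range (fun m => g m - m) ⊆ (fun r => g r - r) '' Set.Ico 0 n := by
    rintro _ ⟨m, rfl⟩
    refine ⟨m % n, ⟨Int.emod_nonneg _ (by omega), Int.emod_lt_of_pos _ (by omega)⟩, ?_⟩
    have key := apply_add_mul_of_add_const hg (m % n) (m / n)
    rw [Int.emod_add_ediv_mul] at key
    dsimp only
    linarith [Int.emod_add_ediv_mul m n]
  obtain ⟨L, hL⟩ := (((Set.finite_Ico _ _).image _).subset hdisp).bddBelow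
  refine (Set.finite_Ioo a (v - L)).subset fun m ⟨ham, hgm⟩ => ⟨ham, ?_⟩
  have := hL ⟨m, rfl⟩
  dsimp only at this
  omega

theorem affineCode_add_natCast (hg : ∀ x, g (x + n) = g x + n) (j : ℤ) :
    affineCode g (j + n) = affineCode g j := by
  rw [affineCode, affineCode, ← Set.ncard_preimage_of_injective_subset_range
    (add_left_injective (n : ℤ)) fun y _ => ⟨y - n, sub_add_cancel y n⟩]
  congr 1
  ext m
  simp [hg]

theorem affineLen_eq_sum_range (hn : 0 < n) (hg : ∀ x, g (x + n) = g x + n) (a : ℤ) :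
    affineLen n g = ∑ k ∈ Finset.range n, affineCode g (a + k) := by
  have hper : Function.Periodic (affineCode g) n := affineCode_add_natCast hg
  rw [hper.sum_range_int_add, ← hper.sum_range_int_add 1]
  have hunion : {p : ℤ × ℤ | 1 ≤ p.1 ∧ p.1 ≤ n ∧ p.1 < p.2 ∧ g p.2 < g p.1} =
      ⋃ k ∈ (Finset.range n : Set ℕ),
        Prod.mk (1 + (k : ℤ)) '' {m : ℤ | 1 + k < m ∧ g m < g (1 + k)} := by
    ext ⟨j, m⟩
    simp only [Set.mem_ofPred_eq, Set.mem_iUnion, Set.mem_image, Finset.coe_range, Set.mem_Iio,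
      Prod.mk.injEq, exists_prop]
    constructor
    · rintro ⟨h1, h2, hjm, hgm⟩
      refine ⟨(j - 1).toNat, by omega, m, ?_⟩
      rw [show 1 + ((j - 1).toNat : ℤ) = j by omega]
      exact ⟨⟨hjm, hgm⟩, rfl, rfl⟩
    · rintro ⟨k, hk, m, ⟨hjm, hgm⟩, rfl, rfl⟩
      exact ⟨by omega, by omega, hjm, hgm⟩
  rw [affineLen, hunion, Set.Finite.ncard_biUnion (Finset.finite_toSet _)
    (fun k _ => (finite_setOf_lt_and_apply_lt hn hg _ _).image _), finsum_mem_coe_finset]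
  · exact Finset.sum_congr rfl fun k _ =>
      Set.ncard_image_of_injective _ (Prod.mk_right_injective _)
  · intro k _ l _ hkl
    refine Set.disjoint_left.mpr ?_
    rintro _ ⟨_, _, rfl⟩ ⟨_, _, hp⟩
    simp only [Prod.mk.injEq] at hp
    omega

theorem affineCode_add_one_lt_iff (hn : 0 < n) (hg : ∀ x, g (x + n) = g x + n)
    (hinj : g.Injective) (j : ℤ) :
    affineCode g (j + 1) < affineCode g j ↔ g (j + 1) < g j := by
  have hfin := finite_setOf_lt_and_apply_lt hn hg
  rw [affineCode, affineCode, Int.ncard_setOf_lt_and_eq_add_ite (hfin (j + 1) (g j))]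
  rcases (hinj.ne (show j + 1 ≠ j by omega)).lt_or_gt with h | h
  · have hsub : {m | j + 1 < m ∧ g m < g (j + 1)} ⊆ {m | j + 1 < m ∧ g m < g j} :=
      fun m hm => ⟨hm.1, hm.2.trans h⟩
    have := Set.ncard_le_ncard hsub (hfin (j + 1) (g j))
    simp only [h, if_true, iff_true]
    omega
  · have hsub : {m | j + 1 < m ∧ g m < g j} ⊆ {m | j + 1 < m ∧ g m < g (j + 1)} :=
      fun m hm => ⟨hm.1, hm.2.trans h⟩
    have := Set.ncard_le_ncard hsub (hfin (j + 1) (g (j + 1)))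
    simp only [h.not_gt, if_false, iff_false, not_lt]
    omega

end AddConst

structure IsSimpleReflection (n : ℕ) (i : ℤ) (s : ℤ → ℤ) : Prop where
  apply_add_mul : ∀ p : ℤ, s (i + p * n) = i + 1 + p * n
  apply_add_one_add_mul : ∀ p : ℤ, s (i + 1 + p * n) = i + p * n
  apply_of_forall_ne : ∀ j : ℤ, (∀ p : ℤ, j ≠ i + p * n ∧ j ≠ i + 1 + p * n) → s j = j

namespace IsSimpleReflection

variable {n : ℕ} {i j : ℤ} {s f : ℤ → ℤ}

theorem not_natCast_dvd_one (hs : IsSimpleReflection n i s) : ¬ (n : ℤ) ∣ 1 := by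
  -- for `n = 1` the first two defining equations disagree at `i + 1`
  intro h
  have hn : (n : ℤ) = 1 := Int.eq_one_of_dvd_one (by positivity) h
  have h1 := hs.apply_add_mul 1
  have h2 := hs.apply_add_one_add_mul 0
  simp only [hn, one_mul, zero_mul, add_zero] at h1 h2
  omega

theorem not_dvd_sub_of_dvd_sub_add_one (hs : IsSimpleReflection n i s)
    (h : (n : ℤ) ∣ j - (i + 1)) : ¬ (n : ℤ) ∣ j - i := fun h' =>
  hs.not_natCast_dvd_one (by simpa using dvd_sub h' h)

theorem apply_of_dvd_sub (hs : IsSimpleReflection n i s) (h : (n : ℤ) ∣ j - i) :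
    s j = j + 1 := by
  obtain ⟨p, hp⟩ := h
  obtain rfl : j = i + p * n := by linarith
  rw [hs.apply_add_mul]
  ring

theorem apply_of_dvd_sub_add_one (hs : IsSimpleReflection n i s) (h : (n : ℤ) ∣ j - (i + 1)) :
    s j = j - 1 := by
  obtain ⟨p, hp⟩ := h
  obtain rfl : j = i + 1 + p * n := by linarith
  rw [hs.apply_add_one_add_mul]
  ring

theorem apply_of_not_dvd (hs : IsSimpleReflection n i s) (h₀ : ¬ (n : ℤ) ∣ j - i)
    (h₁ : ¬ (n : ℤ) ∣ j - (i + 1)) : s j = j :=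
  hs.apply_of_forall_ne j fun p =>
    ⟨by rintro rfl; exact h₀ ⟨p, by ring⟩, by rintro rfl; exact h₁ ⟨p, by ring⟩⟩

theorem involutive (hs : IsSimpleReflection n i s) : s.Involutive := by
  intro j
  by_cases h₀ : (n : ℤ) ∣ j - i
  · rw [hs.apply_of_dvd_sub h₀, hs.apply_of_dvd_sub_add_one (by rwa [add_sub_add_right_eq_sub]),
      add_sub_cancel_right]
  by_cases h₁ : (n : ℤ) ∣ j - (i + 1)
  · rw [hs.apply_of_dvd_sub_add_one h₁, hs.apply_of_dvd_sub (by rwa [sub_sub, add_comm 1]),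
      sub_add_cancel]
  rw [hs.apply_of_not_dvd h₀ h₁, hs.apply_of_not_dvd h₀ h₁]

theorem apply_add_natCast (hs : IsSimpleReflection n i s) (x : ℤ) : s (x + n) = s x + n := by
  have hshift (c : ℤ) : (n : ℤ) ∣ x + n - c ↔ (n : ℤ) ∣ x - c := by
    rw [add_sub_right_comm, dvd_add_self_right]
  by_cases h₀ : (n : ℤ) ∣ x - i
  · rw [hs.apply_of_dvd_sub h₀, hs.apply_of_dvd_sub ((hshift i).mpr h₀), add_right_comm]
  by_cases h₁ : (n : ℤ) ∣ x - (i + 1)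
  · rw [hs.apply_of_dvd_sub_add_one h₁, hs.apply_of_dvd_sub_add_one ((hshift _).mpr h₁),
      add_sub_right_comm]
  rw [hs.apply_of_not_dvd h₀ h₁, hs.apply_of_not_dvd (mt (hshift _).mp h₀) (mt (hshift _).mp h₁)]

theorem comp_add_natCast (hs : IsSimpleReflection n i s) (hf : ∀ x, f (x + n) = f x + n)
    (x : ℤ) : (f ∘ s) (x + n) = (f ∘ s) x + n := by
  simp only [Function.comp_apply, hs.apply_add_natCast, hf]

theorem mapsTo_Ioi (hs : IsSimpleReflection n i s) {a : ℤ} (ha : ¬ (n : ℤ) ∣ a - i) :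
    Set.MapsTo s (Set.Ioi a) (Set.Ioi a) := by
  intro k (hk : a < k)
  show a < s k
  by_cases h₀ : (n : ℤ) ∣ k - i
  · rw [hs.apply_of_dvd_sub h₀]; omega
  by_cases h₁ : (n : ℤ) ∣ k - (i + 1)
  · rw [hs.apply_of_dvd_sub_add_one h₁]
    rcases (show k = a + 1 ∨ a + 1 < k by omega) with rfl | hk'
    · exact absurd (by rwa [add_sub_add_right_eq_sub] at h₁) ha
    · omega
  rw [hs.apply_of_not_dvd h₀ h₁]; exact hk

theorem affineCode_comp_of_not_dvd (hs : IsSimpleReflection n i s) (h₀ : ¬ (n : ℤ) ∣ j - i)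
    (h₁ : ¬ (n : ℤ) ∣ j - (i + 1)) : affineCode (f ∘ s) j = affineCode f j := by
  rw [affineCode, Function.comp_apply, hs.apply_of_not_dvd h₀ h₁]
  exact hs.involutive.ncard_sep_comp (hs.mapsTo_Ioi h₀) (fun m => f m < f j)

theorem affineCode_comp_of_dvd_sub (hs : IsSimpleReflection n i s) (hn : 0 < n)
    (hf : ∀ x, f (x + n) = f x + n) (h : (n : ℤ) ∣ j - i) :
    affineCode (f ∘ s) j = affineCode f (j + 1) + if f j < f (j + 1) then 1 else 0 := by
  have h' : (n : ℤ) ∣ j + 1 - (i + 1) := by rwa [add_sub_add_right_eq_sub]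
  rw [affineCode, Function.comp_apply, hs.apply_of_dvd_sub h,
    Int.ncard_setOf_lt_and_eq_add_ite
      (finite_setOf_lt_and_apply_lt hn (hs.comp_add_natCast hf) _ _),
    Function.comp_apply, hs.apply_of_dvd_sub_add_one h', add_sub_cancel_right]
  congr 1
  exact hs.involutive.ncard_sep_comp (hs.mapsTo_Ioi (hs.not_dvd_sub_of_dvd_sub_add_one h'))
    (fun m => f m < f (j + 1))

theorem affineCode_comp_of_dvd_sub_add_one (hs : IsSimpleReflection n i s) (hn : 0 < n)
    (hf : ∀ x, f (x + n) = f x + n) (h : (n : ℤ) ∣ j - (i + 1)) :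
    affineCode (f ∘ s) j + (if f j < f (j - 1) then 1 else 0) = affineCode f (j - 1) := by
  have hbij : {m | j < m ∧ f (s m) < f (j - 1)}.ncard = {m | j < m ∧ f m < f (j - 1)}.ncard :=
    hs.involutive.ncard_sep_comp (hs.mapsTo_Ioi (hs.not_dvd_sub_of_dvd_sub_add_one h))
      (fun m => f m < f (j - 1))
  rw [affineCode, affineCode, Function.comp_apply, hs.apply_of_dvd_sub_add_one h]
  simp only [Function.comp_apply]
  rw [hbij, Int.ncard_setOf_lt_and_eq_add_ite (a := j - 1)
    (by simpa using finite_setOf_lt_and_apply_lt hn hf j _)]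
  simp only [sub_add_cancel]

theorem affineLen_comp_add_ite (hs : IsSimpleReflection n i s) (hn : 2 ≤ n)
    (hf : ∀ x, f (x + n) = f x + n) :
    affineLen n (f ∘ s) + (if f (i + 1) < f i then 1 else 0) =
      affineLen n f + if f i < f (i + 1) then 1 else 0 := by
  have hcode_i := hs.affineCode_comp_of_dvd_sub (j := i) (by omega) hf (by simp)
  have hcode_i1 := hs.affineCode_comp_of_dvd_sub_add_one (j := i + 1) (by omega) hf (by simp)
  rw [add_sub_cancel_right] at hcode_i1
  rw [affineLen_eq_sum_range (by omega) (hs.comp_add_natCast hf) i,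
    affineLen_eq_sum_range (by omega) hf i]
  obtain ⟨m, rfl⟩ : ∃ m, n = m + 2 := ⟨n - 2, by omega⟩
  have hnd (r : ℤ) (h0 : 0 < r) (h1 : r < (m + 2 : ℕ)) : ¬ ((m + 2 : ℕ) : ℤ) ∣ r := fun h => by
    have := Int.le_of_dvd h0 h
    omega
  have htail : ∀ k ∈ Finset.range m,
      affineCode (f ∘ s) (i + (k + 1 + 1 : ℕ)) = affineCode f (i + (k + 1 + 1 : ℕ)) :=
    fun k hk => by
      have hkm := Finset.mem_range.mp hk
      exact hs.affineCode_comp_of_not_dvd (hnd _ (by omega) (by omega))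
        (hnd _ (by omega) (by omega))
  simp only [Finset.sum_range_succ', Finset.sum_congr rfl htail, Nat.cast_zero, Nat.cast_one,
    zero_add, add_zero]
  omega

theorem affineLen_comp_lt_iff (hs : IsSimpleReflection n i s) (hn : 2 ≤ n)
    (hf : ∀ x, f (x + n) = f x + n) (hinj : f.Injective) :
    affineLen n (f ∘ s) < affineLen n f ↔ f (i + 1) < f i := by
  have hlen := hs.affineLen_comp_add_ite hn hf
  rcases (hinj.ne (show i + 1 ≠ i by omega)).lt_or_gt with h | h
  · simp only [h, h.not_gt, if_true, if_false, iff_true] at hlen ⊢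
    omega
  · simp only [h, h.not_gt, if_true, if_false, iff_false, not_lt] at hlen ⊢
    omega

end IsSimpleReflection

/-- For an affine permutation `f` of quasi-period `n ≥ 2` and the
simple reflection `s = sᵢ`, one has `ℓ(f ∘ sᵢ) < ℓ(f)` iff `cᵢ(f) > c_{i+1}(f)`,
and in that case `c_j(f ∘ sᵢ) = c_{sᵢ(j)}(f) - 1` if `j ≡ i+1 (mod n)` and
`c_j(f ∘ sᵢ) = c_{sᵢ(j)}(f)` otherwise. -/
theorem stmt8 (n : ℕ) (hn : 2 ≤ n) (f : ℤ ≃ ℤ)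
    (hf : ∀ i : ℤ, f (i + n) = f i + n)
    (i : ℤ) (s : ℤ → ℤ)
    (hs1 : ∀ p : ℤ, s (i + p * n) = i + 1 + p * n)
    (hs2 : ∀ p : ℤ, s (i + 1 + p * n) = i + p * n)
    (hs3 : ∀ j : ℤ, (∀ p : ℤ, j ≠ i + p * n ∧ j ≠ i + 1 + p * n) → s j = j) :
    (affineLen n (⇑f ∘ s) < affineLen n ⇑f ↔ affineCode ⇑f (i + 1) < affineCode ⇑f i) ∧
    (affineLen n (⇑f ∘ s) < affineLen n ⇑f →
      ∀ j : ℤ,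
        ((n : ℤ) ∣ (j - (i + 1)) →
          (affineCode (⇑f ∘ s) j : ℤ) = (affineCode ⇑f (s j) : ℤ) - 1) ∧
        (¬ (n : ℤ) ∣ (j - (i + 1)) →
          affineCode (⇑f ∘ s) j = affineCode ⇑f (s j))) := by
  have hs : IsSimpleReflection n i s := ⟨hs1, hs2, hs3⟩
  have hlen := hs.affineLen_comp_lt_iff hn hf f.injective
  refine ⟨hlen.trans (affineCode_add_one_lt_iff (by omega) hf f.injective i).symm,
    fun hdesc j => ⟨fun hj => ?_, fun hj => ?_⟩⟩
  · have hdesc_j : f j < f (j - 1) := by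
      have := apply_add_one_lt_iff_of_dvd_sub hf (j := j - 1) (by rwa [sub_sub, add_comm 1])
      rw [sub_add_cancel] at this
      exact this.mpr (hlen.mp hdesc)
    rw [hs.apply_of_dvd_sub_add_one hj,
      ← hs.affineCode_comp_of_dvd_sub_add_one (by omega) hf hj, if_pos hdesc_j]
    push_cast
    ring
  · by_cases hji : (n : ℤ) ∣ j - i
    · have hdesc_j := (apply_add_one_lt_iff_of_dvd_sub hf hji).mpr (hlen.mp hdesc)
      rw [hs.apply_of_dvd_sub hji, hs.affineCode_comp_of_dvd_sub (by omega) hf hji,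
        if_neg hdesc_j.not_gt, add_zero]
    · rw [hs.apply_of_not_dvd hji hj]
      exact hs.affineCode_comp_of_not_dvd hji hj
end

section
/- Let n ≥ 1 and let f be a bounded affine permutation of quasi-period n. Suppose i < j, i ≢ j (mod n), and the affine permutation f ∘ t_{ij} is also bounded. Then j − i < n. -/
/-- If `f` is a bounded affine permutation of quasi-period `n`,
`i < j` with `i ≢ j (mod n)`, and `f ∘ t_{ij}` is also bounded, then `j - i < n`. -/
theorem stmt9 (n : ℕ) (hn : 1 ≤ n) (f : ℤ ≃ ℤ)
    (hf : ∀ i : ℤ, f (i + n) = f i + n)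
    (hb : ∀ i : ℤ, i ≤ f i ∧ f i ≤ i + n)
    (i j : ℤ) (hij : i < j) (hmod : ¬ (n : ℤ) ∣ (j - i))
    (t : ℤ → ℤ)
    (ht1 : ∀ p : ℤ, t (i + p * n) = j + p * n)
    (ht2 : ∀ p : ℤ, t (j + p * n) = i + p * n)
    (ht3 : ∀ q : ℤ, (∀ p : ℤ, q ≠ i + p * n ∧ q ≠ j + p * n) → t q = q)
    (hbt : ∀ q : ℤ, q ≤ f (t q) ∧ f (t q) ≤ q + n) :
    j - i < n := by
  have hti : t i = j := by simpa using ht1 0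
  have h1 : f j ≤ i + n := by have := (hbt i).2; rwa [hti] at this
  have h2 : j ≤ f j := (hb j).1
  have h3 : j - i ≤ n := by omega
  rcases lt_or_eq_of_le h3 with h | h
  · exact h
  · exact absurd ⟨1, by omega⟩ hmod
end

section
/- Let n ≥ 1 and let f be an affine permutation of quasi-period n for which there exists m ∈ ℤ with i + m ≤ f(i) ≤ i + m + n for all i ∈ ℤ. If i < j, i < j', f(i) > f(j), f(i) > f(j'), and f(j) ≡ f(j') (mod n), then f(j) = f(j'). (Equivalently: the Rothe diagram of any element of T·Bound(n) is toric, i.e., no two distinct cells of D(f) in the cylinder ℤ²/ℤ(n,n) map to the same point of the torus ℤ²/(nℤ × nℤ).) -/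
/-!
Since `f` stays within `n` of the line `x ↦ x + m`, an inversion `i < j`, `f j < f i` forces
`j < i + n`; so the two columns `j, j'` lie in the window `(i, i + n)`. Quasi-periodicity and
injectivity turn `f j ≡ f j' [ZMOD n]` into `j ≡ j' [ZMOD n]`, which inside that window means
`j = j'`.
-/

theorem apply_add_zsmul_of_apply_add {G : Type*} [AddCommGroup G] {f : G → G} {c : G}
    (hf : ∀ x, f (x + c) = f x + c) (k : ℤ) (x : G) : f (x + k • c) = f x + k • c := by
  have hper : Function.Periodic (fun y => f y - y) c := fun y => by
    simp only [hf]
    abel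
  rw [sub_eq_iff_eq_add.mp (hper.zsmul k x)]
  abel

theorem Equiv.dvd_sub_of_dvd_apply_sub {f : ℤ ≃ ℤ} {c : ℤ} (hf : ∀ x, f (x + c) = f x + c)
    {j j' : ℤ} (h : c ∣ f j - f j') : c ∣ j - j' := by
  obtain ⟨k, hk⟩ := h
  have : f j = f (j' + k • c) := by
    rw [apply_add_zsmul_of_apply_add hf, smul_eq_mul]
    linarith
  exact ⟨k, by rw [f.injective this]; ring⟩

theorem lt_add_of_apply_lt_apply {f : ℤ → ℤ} {m n : ℤ}
    (hb : ∀ i, i + m ≤ f i ∧ f i ≤ i + m + n) {i j : ℤ} (h : f j < f i) : j < i + n := by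
  linarith [(hb j).1, (hb i).2]

theorem stmt10_general (n : ℕ) (f : ℤ ≃ ℤ)
    (hf : ∀ i : ℤ, f (i + n) = f i + n)
    (m : ℤ) (hb : ∀ i : ℤ, i + m ≤ f i ∧ f i ≤ i + m + n)
    (i j j' : ℤ) (hij : i < j) (hij' : i < j')
    (h1 : f j < f i) (h2 : f j' < f i)
    (hcong : (n : ℤ) ∣ (f j - f j')) : f j = f j' := by
  have hj := lt_add_of_apply_lt_apply hb h1
  have hj' := lt_add_of_apply_lt_apply hb h2
  have hwindow : |j - j'| < n := abs_sub_lt_iff.mpr ⟨by omega, by omega⟩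
  have hjj' : j = j' :=
    sub_eq_zero.mp (Int.eq_zero_of_abs_lt_dvd (f.dvd_sub_of_dvd_apply_sub hf hcong) hwindow)
  rw [hjj']

/-- If `f` is an affine permutation of quasi-period `n` which is an
integer shift of a bounded affine permutation (`i + m ≤ f i ≤ i + m + n` for all
`i`), then its Rothe diagram is toric: if `(i, f j)` and `(i, f j')` are cells of
`D(f)` with `f j ≡ f j' (mod n)`, then `f j = f j'`. -/
theorem stmt10 (n : ℕ) (hn : 1 ≤ n) (f : ℤ ≃ ℤ)
    (hf : ∀ i : ℤ, f (i + n) = f i + n)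
    (m : ℤ) (hb : ∀ i : ℤ, i + m ≤ f i ∧ f i ≤ i + m + n)
    (i j j' : ℤ) (hij : i < j) (hij' : i < j')
    (h1 : f j < f i) (h2 : f j' < f i)
    (hcong : (n : ℤ) ∣ (f j - f j')) : f j = f j' :=
  stmt10_general n f hf m hb i j j' hij hij' h1 h2 hcong
end

section
/- Let V be a finite-dimensional complex vector space and let D, D' ⊆ ℤ² be finite diagrams such that no integer occurs as the first coordinate of both a cell of D and a cell of D', and no integer occurs as the second coordinate of both a cell of D and a cell of D'. Then there is a GL(V)-equivariant linear isomorphism V[D ∪ D'] ≅ V[D] ⊗ V[D']. -/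
/-!
Because `D` and `D'` share no row and no column, a row-preserving (resp. column-preserving)
permutation of `D ∪ D'` is exactly a pair of such permutations of `D` and `D'`, and its sign is
the product of their signs. Hence, under the splitting `V^{⊗(D ∪ D')} ≅ V^{⊗D} ⊗ V^{⊗D'}`, the
symmetrizer `y_{D ∪ D'}` becomes `y_D ⊗ y_{D'}`, whose image is `V[D] ⊗ V[D']` since over a field
the tensor product of two inclusions is injective. The splitting and the symmetrizers commute with
the diagonal action of `GL(V)`, which gives the equivariance.
-/

open scoped TensorProduct

/-- The Young symmetrizer operator of a finite diagram `D ⊆ ℤ²` on `V^{⊗D}`. -/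
noncomputable def youngOp (V : Type*) [AddCommGroup V] [Module ℂ V]
    (D : Finset (ℤ × ℤ)) :
    (⨂[ℂ] _ : D, V) →ₗ[ℂ] (⨂[ℂ] _ : D, V) :=
  ∑ p : Equiv.Perm D, ∑ q : Equiv.Perm D,
    if (∀ x : D, ((p x : ℤ × ℤ)).1 = (x : ℤ × ℤ).1) ∧
        (∀ x : D, ((q x : ℤ × ℤ)).2 = (x : ℤ × ℤ).2) then
      ((Equiv.Perm.sign q : ℤ) : ℂ) •
        (PiTensorProduct.reindex ℂ (fun _ : D => V) (q * p)).toLinearMap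
    else 0

/-- The generalized Schur module `V[D] = V^{⊗D}·y_D`. -/
noncomputable def schurModule (V : Type*) [AddCommGroup V] [Module ℂ V]
    (D : Finset (ℤ × ℤ)) : Submodule ℂ (⨂[ℂ] _ : D, V) :=
  LinearMap.range (youngOp V D)

/-- The diagonal action of `g ∈ GL(V)` on the tensor power `V^{⊗D}`. -/
noncomputable def glOp (V : Type*) [AddCommGroup V] [Module ℂ V]
    (D : Finset (ℤ × ℤ)) (g : V ≃ₗ[ℂ] V) :
    (⨂[ℂ] _ : D, V) →ₗ[ℂ] (⨂[ℂ] _ : D, V) :=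
  PiTensorProduct.map (fun _ : D => g.toLinearMap)

open Finset

theorem Equiv.Perm.filter_comp_sumElim_eq_map {α β κ : Type*} [Fintype α] [DecidableEq α]
    [Fintype β] [DecidableEq β] [DecidableEq κ] (r : α → κ) (r' : β → κ)
    (h : ∀ a b, r a ≠ r' b) :
    univ.filter (fun σ : Equiv.Perm (α ⊕ β) => Sum.elim r r' ∘ σ = Sum.elim r r') =
      (univ.filter (fun σ : Equiv.Perm α => r ∘ σ = r) ×ˢ
          univ.filter (fun τ : Equiv.Perm β => r' ∘ τ = r')).map
        ⟨Equiv.Perm.sumCongrHom α β, Equiv.Perm.sumCongrHom_injective⟩ := by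
  have comp_sumCongr (σ : Equiv.Perm α) (τ : Equiv.Perm β) :
      Sum.elim r r' ∘ σ.sumCongr τ = Sum.elim (r ∘ σ) (r' ∘ τ) := Sum.elim_comp_map
  ext σ
  simp only [mem_filter, mem_univ, true_and, mem_map, mem_product, Prod.exists,
    Function.Embedding.coeFn_mk, Equiv.Perm.sumCongrHom_apply]
  constructor
  · intro hσ
    have hinl : Set.MapsTo σ (Set.range Sum.inl) (Set.range Sum.inl) := by
      rintro _ ⟨a, rfl⟩
      rcases hσa : σ (Sum.inl a) with a' | b
      · exact ⟨a', rfl⟩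
      · have hval := congrFun hσ (Sum.inl a)
        simp only [Function.comp_apply, hσa, Sum.elim_inr, Sum.elim_inl] at hval
        exact absurd hval.symm (h a b)
    obtain ⟨⟨σ₁, σ₂⟩, rfl⟩ := Equiv.Perm.mem_sumCongrHom_range_of_perm_mapsTo_inl hinl
    rw [Equiv.Perm.sumCongrHom_apply, comp_sumCongr] at hσ
    simp only [funext_iff, Sum.forall, Sum.elim_inl, Sum.elim_inr] at hσ
    exact ⟨σ₁, σ₂, ⟨funext hσ.1, funext hσ.2⟩, rfl⟩
  · rintro ⟨σ₁, σ₂, ⟨h₁, h₂⟩, rfl⟩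
    rw [comp_sumCongr, h₁, h₂]

namespace PiTensorProduct

variable {R M N : Type*} [CommSemiring R] [AddCommMonoid M] [Module R M]
  [AddCommMonoid N] [Module R N]

theorem tmulEquiv_symm_reindex_sumCongr {α β : Type*} (σ : Equiv.Perm α) (τ : Equiv.Perm β)
    (x : ⨂[R] _ : α ⊕ β, M) :
    (tmulEquiv R M).symm (reindex R (fun _ => M) (σ.sumCongr τ) x) =
      TensorProduct.map (reindex R (fun _ => M) σ).toLinearMap
        (reindex R (fun _ => M) τ).toLinearMap ((tmulEquiv R M).symm x) := by
  have h : (tmulEquiv R M).symm.toLinearMap ∘ₗ (reindex R (fun _ => M) (σ.sumCongr τ)).toLinearMap =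
      TensorProduct.map (reindex R (fun _ => M) σ).toLinearMap
          (reindex R (fun _ => M) τ).toLinearMap ∘ₗ (tmulEquiv R M).symm.toLinearMap := by
    ext f
    simp [tmulEquiv_symm_apply, reindex_tprod]
  exact LinearMap.congr_fun h x

theorem tmulEquiv_symm_map {α β : Type*} (f : M →ₗ[R] N) (x : ⨂[R] _ : α ⊕ β, M) :
    (tmulEquiv R N).symm (map (fun _ => f) x) =
      TensorProduct.map (map fun _ => f) (map fun _ => f) ((tmulEquiv R M).symm x) := by
  have h : (tmulEquiv R N).symm.toLinearMap ∘ₗ map (fun _ : α ⊕ β => f) =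
      TensorProduct.map (map fun _ => f) (map fun _ => f) ∘ₗ (tmulEquiv R M).symm.toLinearMap := by
    ext v
    simp [tmulEquiv_symm_apply]
  exact LinearMap.congr_fun h x

variable {α : Type*} [DecidableEq α] (s t : Finset α) (hst : Disjoint s t)

noncomputable def finsetUnionEquiv :
    (⨂[R] _ : ↥(s ∪ t), M) ≃ₗ[R] (⨂[R] _ : s, M) ⊗[R] (⨂[R] _ : t, M) :=
  (reindex R (fun _ => M) (Equiv.Finset.union s t hst).symm).trans (tmulEquiv R M).symm

theorem finsetUnionEquiv_map (f : M →ₗ[R] M) (x : ⨂[R] _ : ↥(s ∪ t), M) :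
    finsetUnionEquiv s t hst (map (fun _ => f) x) =
      TensorProduct.map (map fun _ => f) (map fun _ => f) (finsetUnionEquiv s t hst x) := by
  simp only [finsetUnionEquiv, LinearEquiv.trans_apply, ← tmulEquiv_symm_map, ← map_reindex]

end PiTensorProduct

open PiTensorProduct

section RangeTensor

variable {K M N P : Type*} [Field K] [AddCommGroup M] [Module K M] [AddCommGroup N] [Module K N]
  [AddCommGroup P] [Module K P] (Φ : M ≃ₗ[K] N ⊗[K] P) {y : M →ₗ[K] M} {y₁ : N →ₗ[K] N}
  {y₂ : P →ₗ[K] P}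

theorem map_range_eq_range_mapIncl (hy : ∀ x, Φ (y x) = TensorProduct.map y₁ y₂ (Φ x)) :
    (LinearMap.range y).map Φ.toLinearMap =
      LinearMap.range (TensorProduct.mapIncl (LinearMap.range y₁) (LinearMap.range y₂)) := by
  have hcomp : Φ.toLinearMap ∘ₗ y = TensorProduct.map y₁ y₂ ∘ₗ Φ.toLinearMap :=
    LinearMap.ext hy
  rw [← LinearMap.range_comp, hcomp, LinearMap.range_comp, LinearEquiv.range, Submodule.map_top,
    TensorProduct.range_mapIncl, TensorProduct.range_map]

theorem TensorProduct.mapIncl_injective (p : Submodule K N) (q : Submodule K P) :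
    Function.Injective (TensorProduct.mapIncl p q) :=
  TensorProduct.map_injective_of_flat_flat _ _ p.injective_subtype q.injective_subtype

noncomputable def rangeEquivTensor (hy : ∀ x, Φ (y x) = TensorProduct.map y₁ y₂ (Φ x)) :
    LinearMap.range y ≃ₗ[K] LinearMap.range y₁ ⊗[K] LinearMap.range y₂ :=
  ((Φ.submoduleMap _).trans (LinearEquiv.ofEq _ _ (map_range_eq_range_mapIncl Φ hy))).trans
    (LinearEquiv.ofInjective _ (TensorProduct.mapIncl_injective _ _)).symm

theorem mapIncl_rangeEquivTensor (hy : ∀ x, Φ (y x) = TensorProduct.map y₁ y₂ (Φ x))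
    (v : LinearMap.range y) :
    TensorProduct.mapIncl _ _ (rangeEquivTensor Φ hy v) = Φ v := by
  rw [← LinearEquiv.ofInjective_apply (h := TensorProduct.mapIncl_injective _ _)]
  simp [rangeEquivTensor]

theorem rangeEquivTensor_restrict (hy : ∀ x, Φ (y x) = TensorProduct.map y₁ y₂ (Φ x))
    {g : M →ₗ[K] M} {g₁ : N →ₗ[K] N} {g₂ : P →ₗ[K] P}
    (hg : ∀ x, Φ (g x) = TensorProduct.map g₁ g₂ (Φ x))
    (h : ∀ v ∈ LinearMap.range y, g v ∈ LinearMap.range y)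
    (h₁ : ∀ v ∈ LinearMap.range y₁, g₁ v ∈ LinearMap.range y₁)
    (h₂ : ∀ v ∈ LinearMap.range y₂, g₂ v ∈ LinearMap.range y₂) (v : LinearMap.range y) :
    rangeEquivTensor Φ hy (g.restrict h v) =
      TensorProduct.map (g₁.restrict h₁) (g₂.restrict h₂) (rangeEquivTensor Φ hy v) := by
  apply TensorProduct.mapIncl_injective
  rw [mapIncl_rangeEquivTensor, LinearMap.coe_restrict_apply, hg,
    ← mapIncl_rangeEquivTensor Φ hy, ← LinearMap.comp_apply, ← LinearMap.comp_apply,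
    ← TensorProduct.map_comp, ← TensorProduct.map_comp, LinearMap.subtype_comp_restrict,
    LinearMap.subtype_comp_restrict]
  rfl

end RangeTensor

section YoungSymmetrizer

variable (R M : Type*) [CommRing R] [AddCommGroup M] [Module R M]
  {ι ι' κ : Type*} [Fintype ι] [DecidableEq ι] [Fintype ι'] [DecidableEq ι'] [DecidableEq κ]

/-- The symmetrizer of the diagram whose cell `i` lies in row `row i` and column `col i`. -/
noncomputable def youngSymmetrizer (row col : ι → κ) :
    (⨂[R] _ : ι, M) →ₗ[R] (⨂[R] _ : ι, M) :=
  ∑ p ∈ univ.filter (fun p : Equiv.Perm ι => row ∘ p = row),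
    ∑ q ∈ univ.filter (fun q : Equiv.Perm ι => col ∘ q = col),
      ((Equiv.Perm.sign q : ℤ) : R) • (reindex R (fun _ => M) (q * p)).toLinearMap

variable {R M}

theorem youngSymmetrizer_apply (row col : ι → κ) (x : ⨂[R] _ : ι, M) :
    youngSymmetrizer R M row col x =
      ∑ p ∈ univ.filter (fun p : Equiv.Perm ι => row ∘ p = row),
        ∑ q ∈ univ.filter (fun q : Equiv.Perm ι => col ∘ q = col),
          ((Equiv.Perm.sign q : ℤ) : R) • reindex R (fun _ => M) (q * p) x := by
  simp [youngSymmetrizer]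

theorem map_youngSymmetrizer (f : M →ₗ[R] M) (row col : ι → κ) (x : ⨂[R] _ : ι, M) :
    map (fun _ => f) (youngSymmetrizer R M row col x) =
      youngSymmetrizer R M row col (map (fun _ => f) x) := by
  simp only [youngSymmetrizer_apply, map_sum, map_smul, ← map_reindex]

theorem reindex_youngSymmetrizer (e : ι ≃ ι') (row col : ι → κ) (x : ⨂[R] _ : ι, M) :
    reindex R (fun _ => M) e (youngSymmetrizer R M row col x) =
      youngSymmetrizer R M (row ∘ e.symm) (col ∘ e.symm) (reindex R (fun _ => M) e x) := by
  have fixes_permCongr (f : ι → κ) (σ : Equiv.Perm ι) :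
      (f ∘ e.symm) ∘ e.permCongr σ = f ∘ e.symm ↔ f ∘ σ = f := by
    simp only [funext_iff, Function.comp_apply, Equiv.permCongr_apply, Equiv.symm_apply_apply]
    exact e.symm.forall_congr_right (q := fun i => f (σ i) = f i)
  have reindex_permCongr (σ : Equiv.Perm ι) (z : ⨂[R] _ : ι, M) :
      reindex R (fun _ => M) e (reindex R (fun _ => M) σ z) =
        reindex R (fun _ => M) (e.permCongr σ) (reindex R (fun _ => M) e z) := by
    rw [← LinearEquiv.trans_apply, reindex_trans, ← LinearEquiv.trans_apply, reindex_trans]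
    congr 2
    ext i
    simp [Equiv.permCongr_apply]
  simp only [youngSymmetrizer_apply, map_sum, map_smul]
  refine sum_equiv e.permCongr
    (fun p => by simp only [mem_filter, mem_univ, true_and, fixes_permCongr]) fun p _ => ?_
  refine sum_equiv e.permCongr
    (fun q => by simp only [mem_filter, mem_univ, true_and, fixes_permCongr]) fun q _ => ?_
  rw [reindex_permCongr, Equiv.Perm.sign_permCongr, Equiv.permCongr_mul]

theorem tmulEquiv_symm_youngSymmetrizer_sumElim {α β : Type*} [Fintype α] [DecidableEq α]
    [Fintype β] [DecidableEq β] (r c : α → κ) (r' c' : β → κ) (hr : ∀ a b, r a ≠ r' b)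
    (hc : ∀ a b, c a ≠ c' b) (x : ⨂[R] _ : α ⊕ β, M) :
    (tmulEquiv R M).symm (youngSymmetrizer R M (Sum.elim r r') (Sum.elim c c') x) =
      TensorProduct.map (youngSymmetrizer R M r c) (youngSymmetrizer R M r' c')
        ((tmulEquiv R M).symm x) := by
  rw [youngSymmetrizer_apply, Equiv.Perm.filter_comp_sumElim_eq_map r r' hr,
    Equiv.Perm.filter_comp_sumElim_eq_map c c' hc]
  simp only [sum_map, sum_product, map_sum, map_smul, Function.Embedding.coeFn_mk,
    Equiv.Perm.sumCongrHom_apply, Equiv.Perm.sumCongr_mul, Equiv.Perm.sign_sumCongr,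
    tmulEquiv_symm_reindex_sumCongr]
  rw [youngSymmetrizer, youngSymmetrizer,
    ← TensorProduct.mapBilinear_apply (σ₁₂ := RingHom.id R)]
  simp only [map_sum, map_smul, LinearMap.sum_apply, LinearMap.smul_apply,
    TensorProduct.mapBilinear_apply, smul_sum]
  rw [sum_comm]
  refine sum_congr rfl fun p₂ _ => ?_
  conv_rhs => rw [sum_comm]
  refine sum_congr rfl fun p₁ _ => ?_
  rw [sum_comm]
  refine sum_congr rfl fun q₂ _ => sum_congr rfl fun q₁ _ => ?_
  rw [Units.val_mul, Int.cast_mul, mul_comm, mul_smul]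

theorem finsetUnionEquiv_youngSymmetrizer {α : Type*} [DecidableEq α] (s t : Finset α)
    (hst : Disjoint s t) (row col : α → κ) (hrow : ∀ a ∈ s, ∀ b ∈ t, row a ≠ row b)
    (hcol : ∀ a ∈ s, ∀ b ∈ t, col a ≠ col b) (x : ⨂[R] _ : ↥(s ∪ t), M) :
    finsetUnionEquiv s t hst
        (youngSymmetrizer R M (fun i : ↥(s ∪ t) => row i) (fun i => col i) x) =
      TensorProduct.map (youngSymmetrizer R M (fun i : s => row i) (fun i : s => col i))
        (youngSymmetrizer R M (fun i : t => row i) (fun i : t => col i))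
        (finsetUnionEquiv s t hst x) := by
  have comp_union (f : α → κ) :
      (fun i : ↥(s ∪ t) => f i) ∘ (Equiv.Finset.union s t hst).symm.symm =
        Sum.elim (fun i : s => f i) (fun i : t => f i) := by
    ext (i | i) <;> rfl
  rw [finsetUnionEquiv, LinearEquiv.trans_apply, reindex_youngSymmetrizer, comp_union,
    comp_union]
  exact tmulEquiv_symm_youngSymmetrizer_sumElim _ _ _ _
    (fun (a : s) (b : t) => hrow a a.2 b b.2) (fun (a : s) (b : t) => hcol a a.2 b b.2) _

end YoungSymmetrizer

theorem youngOp_eq_youngSymmetrizer (V : Type*) [AddCommGroup V] [Module ℂ V]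
    (D : Finset (ℤ × ℤ)) :
    youngOp V D =
      youngSymmetrizer ℂ V (fun x : D => (x : ℤ × ℤ).1) (fun x : D => (x : ℤ × ℤ).2) := by
  simp only [youngOp, youngSymmetrizer, sum_filter, ite_and, funext_iff, Function.comp_apply]
  refine sum_congr rfl fun p _ => ?_
  split_ifs <;> simp

theorem glOp_mem_schurModule (V : Type*) [AddCommGroup V] [Module ℂ V]
    (D : Finset (ℤ × ℤ)) (g : V ≃ₗ[ℂ] V) :
    ∀ v ∈ schurModule V D, glOp V D g v ∈ schurModule V D := by
  rintro _ ⟨w, rfl⟩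
  refine ⟨glOp V D g w, ?_⟩
  rw [youngOp_eq_youngSymmetrizer]
  exact (map_youngSymmetrizer _ _ _ w).symm

theorem stmt14_general (V : Type*) [AddCommGroup V] [Module ℂ V]
    (D D' : Finset (ℤ × ℤ))
    (hrow : ∀ x ∈ D, ∀ y ∈ D', x.1 ≠ y.1)
    (hcol : ∀ x ∈ D, ∀ y ∈ D', x.2 ≠ y.2) :
    ∃ (h : ∀ g : V ≃ₗ[ℂ] V, ∀ v ∈ schurModule V (D ∪ D'),
        glOp V (D ∪ D') g v ∈ schurModule V (D ∪ D'))
      (h1 : ∀ g : V ≃ₗ[ℂ] V, ∀ v ∈ schurModule V D,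
        glOp V D g v ∈ schurModule V D)
      (h2 : ∀ g : V ≃ₗ[ℂ] V, ∀ v ∈ schurModule V D',
        glOp V D' g v ∈ schurModule V D')
      (e : ↥(schurModule V (D ∪ D')) ≃ₗ[ℂ]
        (↥(schurModule V D) ⊗[ℂ] ↥(schurModule V D'))),
      ∀ (g : V ≃ₗ[ℂ] V) (v : ↥(schurModule V (D ∪ D'))),
        e ⟨glOp V (D ∪ D') g v, h g v v.2⟩ =
          TensorProduct.map ((glOp V D g).restrict (h1 g))
            ((glOp V D' g).restrict (h2 g)) (e v) := by
  have hDD' : Disjoint D D' := disjoint_left.2 fun x hx hx' => hrow x hx x hx' rfl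
  have hy (x : ⨂[ℂ] _ : ↥(D ∪ D'), V) :
      finsetUnionEquiv D D' hDD' (youngOp V (D ∪ D') x) =
        TensorProduct.map (youngOp V D) (youngOp V D') (finsetUnionEquiv D D' hDD' x) := by
    simp only [youngOp_eq_youngSymmetrizer]
    exact finsetUnionEquiv_youngSymmetrizer D D' hDD' Prod.fst Prod.snd hrow hcol x
  exact ⟨glOp_mem_schurModule V _, glOp_mem_schurModule V D, glOp_mem_schurModule V D',
    rangeEquivTensor _ hy, fun g => rangeEquivTensor_restrict _ hy
      (finsetUnionEquiv_map D D' hDD' g.toLinearMap) (glOp_mem_schurModule V _ g)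
      (glOp_mem_schurModule V D g) (glOp_mem_schurModule V D' g)⟩

/-- If no row index and no column index is shared between the
finite diagrams `D` and `D'`, then there is a `GL(V)`-equivariant linear
isomorphism `V[D ∪ D'] ≅ V[D] ⊗ V[D']`. -/
theorem stmt14 (V : Type*) [AddCommGroup V] [Module ℂ V] [FiniteDimensional ℂ V]
    (D D' : Finset (ℤ × ℤ))
    (hrow : ∀ x ∈ D, ∀ y ∈ D', x.1 ≠ y.1)
    (hcol : ∀ x ∈ D, ∀ y ∈ D', x.2 ≠ y.2) :
    ∃ (h : ∀ g : V ≃ₗ[ℂ] V, ∀ v ∈ schurModule V (D ∪ D'),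
        glOp V (D ∪ D') g v ∈ schurModule V (D ∪ D'))
      (h1 : ∀ g : V ≃ₗ[ℂ] V, ∀ v ∈ schurModule V D,
        glOp V D g v ∈ schurModule V D)
      (h2 : ∀ g : V ≃ₗ[ℂ] V, ∀ v ∈ schurModule V D',
        glOp V D' g v ∈ schurModule V D')
      (e : ↥(schurModule V (D ∪ D')) ≃ₗ[ℂ]
        (↥(schurModule V D) ⊗[ℂ] ↥(schurModule V D'))),
      ∀ (g : V ≃ₗ[ℂ] V) (v : ↥(schurModule V (D ∪ D'))),
        e ⟨glOp V (D ∪ D') g v, h g v v.2⟩ =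
          TensorProduct.map ((glOp V D g).restrict (h1 g))
            ((glOp V D' g).restrict (h2 g)) (e v) :=
  stmt14_general V D D' hrow hcol
end

section
/- Let n ≥ 1 and let f be a bounded affine permutation of quasi-period n. If p < q, 1 ≤ q ≤ n, and f(p) > f(q), then p ≥ 1 − n. Consequently, ℓ(f) = #{(p,q) ∈ ℤ² : 1 − n ≤ p < q ≤ n, 1 ≤ q, f(p) > f(q)}; that is, ℓ(f) equals the number of inversions of the finite word f(1−n), f(2−n), …, f(n) whose second position lies in {1,…,n}. -/
/-- For a bounded affine permutation `f` of quasi-period `n`: every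
inversion `(p,q)` with `1 ≤ q ≤ n` has `p ≥ 1 - n`, and consequently the length
`ℓ(f)` equals the number of inversions of the word `f(1-n), …, f(n)` whose second
position lies in `{1,…,n}`. -/
theorem stmt16 (n : ℕ) (hn : 1 ≤ n) (f : ℤ ≃ ℤ)
    (hf : ∀ i : ℤ, f (i + n) = f i + n)
    (hb : ∀ i : ℤ, i ≤ f i ∧ f i ≤ i + n) :
    (∀ p q : ℤ, p < q → 1 ≤ q → q ≤ n → f q < f p → 1 - n ≤ p) ∧
    {p : ℤ × ℤ | 1 ≤ p.1 ∧ p.1 ≤ n ∧ p.1 < p.2 ∧ f p.2 < f p.1}.ncard =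
      ((Finset.Icc (1 - (n : ℤ)) n ×ˢ Finset.Icc (1 : ℤ) n).filter
        (fun p => p.1 < p.2 ∧ f p.2 < f p.1)).card := by
  have key : ∀ i : ℤ, f (i - n) = f i - n := by
    intro i
    have h := hf (i - n)
    rw [sub_add_cancel] at h
    linarith
  refine ⟨?_, ?_⟩
  · intro p q hpq hq1 hqn hinv
    have h1 := (hb p).2
    have h2 := (hb q).1
    linarith
  · set F := ((Finset.Icc (1 - (n : ℤ)) n ×ˢ Finset.Icc (1 : ℤ) n).filter
        (fun p => p.1 < p.2 ∧ f p.2 < f p.1)) with hF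
    have hmem : ∀ a : ℤ × ℤ, a ∈ F ↔
        (1 - (n : ℤ) ≤ a.1 ∧ a.1 ≤ n) ∧ (1 ≤ a.2 ∧ a.2 ≤ n) ∧ a.1 < a.2 ∧ f a.2 < f a.1 := by
      intro a
      simp [hF, Finset.mem_filter, Finset.mem_product, Finset.mem_Icc, and_assoc]
    set g : ℤ × ℤ → ℤ × ℤ := fun p => if 1 ≤ p.1 then p else (p.1 + n, p.2 + n) with hg
    have himg : {p : ℤ × ℤ | 1 ≤ p.1 ∧ p.1 ≤ n ∧ p.1 < p.2 ∧ f p.2 < f p.1} = g '' ↑F := by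
      ext ⟨p, q⟩
      simp only [Set.mem_setOf_eq, Set.mem_image, Finset.mem_coe]
      constructor
      · rintro ⟨h1, h2, h3, h4⟩
        by_cases hq : q ≤ n
        · refine ⟨(p, q), ?_, ?_⟩
          · rw [hmem]
            exact ⟨⟨by linarith, h2⟩, ⟨by linarith, hq⟩, h3, h4⟩
          · simp [hg, h1]
        · refine ⟨(p - n, q - n), ?_, ?_⟩
          · rw [hmem]
            have hq2 : q ≤ 2 * n - 1 := by
              have := (hb q).1
              have := (hb p).2
              omega
            have hfq : f (q - n) = f q - n := key q
            have hfp : f (p - n) = f p - n := key p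
            dsimp only
            exact ⟨⟨by linarith, by linarith⟩, ⟨by linarith, by linarith⟩, by linarith,
              by rw [hfq, hfp]; linarith⟩
          · have : ¬ (1 : ℤ) ≤ p - n := by linarith
            simp only [hg, this, if_false]
            simp
      · rintro ⟨⟨a, b⟩, hab, hgab⟩
        rw [hmem] at hab
        obtain ⟨⟨h1, h2⟩, ⟨h3, h4⟩, h5, h6⟩ := hab
        by_cases ha : (1 : ℤ) ≤ a
        · simp only [hg, ha, if_true] at hgab
          obtain ⟨rfl, rfl⟩ := Prod.mk.injEq .. ▸ Prod.ext_iff.mp hgab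
          exact ⟨ha, by linarith, h5, h6⟩
        · simp only [hg, ha, if_false] at hgab
          obtain ⟨rfl, rfl⟩ := Prod.ext_iff.mp hgab
          have hfa : f (a + n) = f a + n := hf a
          have hfb : f (b + n) = f b + n := hf b
          refine ⟨by simp; linarith, by simp; linarith, by simp; linarith, ?_⟩
          simp only [hfa, hfb]
          linarith
    have hinj : Set.InjOn g ↑F := by
      intro a ha b hb' hab
      rw [Finset.mem_coe, hmem] at ha hb'
      simp only [hg] at hab
      by_cases h1 : (1 : ℤ) ≤ a.1 <;> by_cases h2 : (1 : ℤ) ≤ b.1 <;>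
        simp only [h1, h2, if_true, if_false] at hab
      · exact hab
      · exfalso
        have := congrArg Prod.snd hab
        simp at this
        omega
      · exfalso
        have := congrArg Prod.snd hab
        simp at this
        omega
      · have := Prod.ext_iff.mp hab
        ext <;> omega
    rw [himg, Set.ncard_image_of_injOn hinj, Set.ncard_coe_finset]
end

section
/- Let n ≥ 1 and let f be an affine permutation of quasi-period n with f(i) ∈ {i, i + n} for every i ∈ ℤ, and set k = #{i ∈ {1,…,n} : f(i) = i + n}. Then ℓ(f) = k(n − k). -/
/-- If `f` is an affine permutation of quasi-period `n` with
`f i ∈ {i, i + n}` for all `i`, and `k = #{i ∈ [1,n] : f i = i + n}`, then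
`ℓ(f) = k (n - k)`. -/
theorem stmt17 (n : ℕ) (hn : 1 ≤ n) (f : ℤ ≃ ℤ)
    (hf : ∀ i : ℤ, f (i + n) = f i + n)
    (hv : ∀ i : ℤ, f i = i ∨ f i = i + n) :
    {p : ℤ × ℤ | 1 ≤ p.1 ∧ p.1 ≤ n ∧ p.1 < p.2 ∧ f p.2 < f p.1}.ncard =
      ((Finset.Icc (1 : ℤ) n).filter (fun i => f i = i + n)).card *
        (n - ((Finset.Icc (1 : ℤ) n).filter (fun i => f i = i + n)).card) := by
  have hn0 : (0:ℤ) < n := by exact_mod_cast hn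
  set T := (Finset.Icc (1:ℤ) n).filter (fun i => f i = i + n) with hT
  set U := (Finset.Icc (1:ℤ) n).filter (fun i => f i = i) with hU
  set F := (T ×ˢ U).image (fun p : ℤ × ℤ => (p.1, if p.1 < p.2 then p.2 else p.2 + n))
    with hF
  -- Step A : set equality
  have hAeq : {p : ℤ × ℤ | 1 ≤ p.1 ∧ p.1 ≤ n ∧ p.1 < p.2 ∧ f p.2 < f p.1} = ↑F := by
    ext ⟨i, j⟩
    simp only [Set.mem_setOf_eq, hF, Finset.coe_image, Set.mem_image, Finset.mem_coe,
      Finset.mem_product, Finset.mem_filter, Finset.mem_Icc, hT, hU]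
    constructor
    · rintro ⟨h1, h2, h3, h4⟩
      have hi : f i = i + n := by
        rcases hv i with hi | hi
        · exfalso
          rcases hv j with hj | hj <;> rw [hi, hj] at h4 <;> linarith
        · exact hi
      have hj : f j = j := by
        rcases hv j with hj | hj
        · exact hj
        · exfalso; rw [hi, hj] at h4; linarith
      have hjn : j < i + n := by rw [hi, hj] at h4; linarith
      by_cases hle : j ≤ n
      · exact ⟨(i, j), ⟨⟨⟨h1, h2⟩, hi⟩, ⟨⟨by linarith, hle⟩, hj⟩⟩, by simp [h3]⟩
      · have hb1 : (1:ℤ) ≤ j - n := by linarith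
        have hb2 : j - (n:ℤ) ≤ n := by linarith
        have hfjn : f (j - n) = j - n := by
          have := hf (j - n)
          rw [show j - n + (n:ℤ) = j by ring, hj] at this
          linarith
        have hni : ¬ i < j - (n:ℤ) := by linarith
        exact ⟨(i, j - n), ⟨⟨⟨h1, h2⟩, hi⟩, ⟨⟨hb1, hb2⟩, hfjn⟩⟩, by simp [hni]⟩
    · rintro ⟨⟨a, r⟩, ⟨⟨⟨ha1, ha2⟩, hfa⟩, ⟨⟨hr1, hr2⟩, hfr⟩⟩, heq⟩
      have hai : a = i := (Prod.mk.injEq _ _ _ _).mp heq |>.1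
      subst hai
      have hne : r ≠ a := by
        intro h; rw [h, hfa] at hfr; linarith
      by_cases hlt : a < r
      · have hj : j = r := by simpa [hlt] using ((Prod.mk.injEq _ _ _ _).mp heq |>.2).symm
        subst hj
        exact ⟨ha1, ha2, hlt, by rw [hfr, hfa]; linarith⟩
      · have hrlt : r < a := lt_of_le_of_ne (not_lt.mp hlt) hne
        have hj : j = r + n := by simpa [hlt] using ((Prod.mk.injEq _ _ _ _).mp heq |>.2).symm
        subst hj
        have hfj : f (r + n) = r + n := by rw [hf, hfr]
        exact ⟨ha1, ha2, by linarith, by rw [hfj, hfa]; linarith⟩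
  rw [hAeq, Set.ncard_coe_finset]
  -- Step B : card of the image
  have hinj : Set.InjOn (fun p : ℤ × ℤ => (p.1, if p.1 < p.2 then p.2 else p.2 + n))
      ↑(T ×ˢ U) := by
    rintro ⟨i1, r1⟩ hm1 ⟨i2, r2⟩ hm2 heq
    simp only [Finset.coe_product, Set.mem_prod, Finset.mem_coe, Finset.mem_filter,
      Finset.mem_Icc, hT, hU] at hm1 hm2
    obtain ⟨hi, hj⟩ := (Prod.mk.injEq _ _ _ _).mp heq
    subst hi
    have hb1 := hm1.2.1
    have hb2 := hm2.2.1
    have : r1 = r2 := by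
      split_ifs at hj <;> omega
    rw [this]
  have hcard : F.card = T.card * U.card := by
    rw [hF, Finset.card_image_of_injOn hinj, Finset.card_product]
  rw [hcard]
  -- Step C : U.card = n - T.card
  have hUcompl : U = (Finset.Icc (1:ℤ) n).filter (fun i => ¬ f i = i + n) := by
    ext x
    simp only [Finset.mem_filter, hU, and_congr_right_iff]
    intro _
    constructor
    · intro h hc; rw [h] at hc; linarith
    · intro h; rcases hv x with h' | h'
      · exact h'
      · exact absurd h' h
  have hsum : T.card + U.card = n := by
    rw [hUcompl, hT, Finset.card_filter_add_card_filter_not]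
    simp [Int.card_Icc]
  have : U.card = n - T.card := by omega
  rw [this]
end

section
/- Let n ≥ 3, let f be an affine permutation of quasi-period n, and let 1 ≤ j < r < s ≤ n satisfy f(j) < f(s) < f(r). Assume there is no integer p with j < p < r and f(j) < f(p) < f(s), and no integer p with r < p < s and f(s) < f(p) < f(r). Let g = f ∘ t_{rs} ∘ t_{jr}, so that the word (g(1),…,g(n)) is obtained from (f(1),…,f(n)) by replacing the entries f(j), f(r), f(s) in positions j, r, s by f(s), f(j), f(r) respectively. Then the finite words (f(1),…,f(n)) and (g(1),…,g(n)) have the same number of inversions, and (g(1),…,g(n)) is lexicographically greater than (f(1),…,f(n)). -/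
/-- The affine transposition `t_{ij}` (for `i ≢ j (mod n)`): it interchanges
`i + pn` and `j + pn` for all `p` and fixes all other integers. -/
def affineTranspose (n : ℕ) (i j : ℤ) (q : ℤ) : ℤ :=
  if (n : ℤ) ∣ (q - i) then j + (q - i)
  else if (n : ℤ) ∣ (q - j) then i + (q - j)
  else q

/-!
Swapping the entries at positions `a < b` of a word `w` with `w a < w b` adds exactly one
inversion when no entry strictly between positions `a` and `b` has a value strictly between
`w a` and `w b`: the new inversion `(a, b)` is the only one not matched with an old inversion,
pairs meeting the open interval `(a, b)` being matched with themselves and all other pairs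
with their images under the swap.

On `[1, n]` the word of `g = f ∘ t_{rs} ∘ t_{jr}` is `f ∘ swap r s ∘ swap j r`. The gap
hypotheses say that both `f = (f ∘ swap r s) ∘ swap r s` and `g` arise from `f ∘ swap r s`
by such a swap, so each has one inversion more than `f ∘ swap r s`. The words first differ
at position `j`, where `g j = f s > f j`.
-/

open Equiv Finset

section Inversions

variable {ι α : Type*} [LinearOrder ι] [LinearOrder α]

def inversions (S : Finset ι) (w : ι → α) : Finset (ι × ι) :=
  (S ×ˢ S).filter fun x => x.1 < x.2 ∧ w x.2 < w x.1

lemma inversions_congr {S : Finset ι} {w w' : ι → α} (h : ∀ x ∈ S, w x = w' x) :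
    inversions S w = inversions S w' := by
  refine filter_congr fun x hx => ?_
  rw [mem_product] at hx
  rw [h _ hx.1, h _ hx.2]

def swapOutside (a b : ι) (x : ι × ι) : ι × ι :=
  if a < x.1 ∧ x.1 < b ∨ a < x.2 ∧ x.2 < b then x else (swap a b x.1, swap a b x.2)

lemma swapOutside_swapOutside (a b : ι) (x : ι × ι) :
    swapOutside a b (swapOutside a b x) = x := by
  obtain ⟨p, q⟩ := x
  unfold swapOutside
  split_ifs <;> grind

variable {S : Finset ι} {w : ι → α} {a b : ι}

lemma mem_inversions_iff_swapOutside_mem (ha : a ∈ S) (hb : b ∈ S) (hab : a < b)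
    (hwab : w a < w b) (hw : Set.InjOn w S) (hgap : ∀ c ∈ S, a < c → c < b → ¬ (w a < w c ∧ w c < w b))
    (x : ι × ι) :
    x ∈ inversions S w ↔
      swapOutside a b x ∈ inversions S (w ∘ swap a b) ∧ swapOutside a b x ≠ (a, b) := by
  obtain ⟨p, q⟩ := x
  simp only [inversions, swapOutside, mem_filter, mem_product]
  split_ifs
  · grind [Set.InjOn]
  · simp only [Function.comp_apply, swap_apply_self]
    grind (splits := 20)

lemma card_inversions_comp_swap (ha : a ∈ S) (hb : b ∈ S) (hab : a < b) (hwab : w a < w b)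
    (hw : Set.InjOn w S) (hgap : ∀ c ∈ S, a < c → c < b → ¬ (w a < w c ∧ w c < w b)) :
    #(inversions S (w ∘ swap a b)) = #(inversions S w) + 1 := by
  have hmem : (a, b) ∈ inversions S (w ∘ swap a b) := by
    simpa [inversions, ha, hb, hab] using hwab
  have key := mem_inversions_iff_swapOutside_mem ha hb hab hwab hw hgap
  rw [← card_erase_add_one hmem]
  congr 1
  refine (card_nbij' (swapOutside a b) (swapOutside a b) (fun x hx => ?_) (fun y hy => ?_)
    (fun x _ => swapOutside_swapOutside a b x) (fun x _ => swapOutside_swapOutside a b x)).symm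
  · simpa [and_comm] using (key x).mp hx
  · rw [coe_erase, Set.mem_sdiff, Set.mem_singleton_iff] at hy
    exact (key _).mpr (by rw [swapOutside_swapOutside]; exact ⟨hy.1, hy.2⟩)

end Inversions

lemma eq_of_dvd_sub_of_mem_Icc {n : ℕ} {x y : ℤ} (hx : x ∈ Icc 1 (n : ℤ))
    (hy : y ∈ Icc 1 (n : ℤ)) (h : (n : ℤ) ∣ x - y) : x = y := by
  rw [mem_Icc] at hx hy
  have := Int.eq_zero_of_abs_lt_dvd h (abs_lt.mpr ⟨by omega, by omega⟩)
  omega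

lemma affineTranspose_eq_swap {n : ℕ} {i k q : ℤ} (hi : i ∈ Icc 1 (n : ℤ))
    (hk : k ∈ Icc 1 (n : ℤ)) (hq : q ∈ Icc 1 (n : ℤ)) :
    affineTranspose n i k q = swap i k q := by
  have hqi : (n : ℤ) ∣ q - i ↔ q = i := ⟨eq_of_dvd_sub_of_mem_Icc hq hi, fun h => by simp [h]⟩
  have hqk : (n : ℤ) ∣ q - k ↔ q = k := ⟨eq_of_dvd_sub_of_mem_Icc hq hk, fun h => by simp [h]⟩
  simp only [affineTranspose, hqi, hqk, swap_apply_def]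
  split_ifs <;> omega

lemma affineTranspose_affineTranspose_eq_swap_swap {n : ℕ} {i k l q : ℤ}
    (hi : i ∈ Icc 1 (n : ℤ)) (hk : k ∈ Icc 1 (n : ℤ)) (hl : l ∈ Icc 1 (n : ℤ))
    (hq : q ∈ Icc 1 (n : ℤ)) :
    affineTranspose n k l (affineTranspose n i k q) = swap k l (swap i k q) := by
  rw [affineTranspose_eq_swap hi hk hq, affineTranspose_eq_swap hk hl]
  rw [swap_apply_def]
  split_ifs <;> assumption

theorem stmt19_general (n : ℕ) (f : ℤ ≃ ℤ)
    (j r s : ℤ) (h1 : 1 ≤ j) (h2 : j < r) (h3 : r < s) (h4 : s ≤ n)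
    (hv : f j < f s ∧ f s < f r)
    (hgap1 : ¬ ∃ p : ℤ, j < p ∧ p < r ∧ f j < f p ∧ f p < f s)
    (hgap2 : ¬ ∃ p : ℤ, r < p ∧ p < s ∧ f s < f p ∧ f p < f r) :
    ((Finset.Icc (1 : ℤ) n ×ˢ Finset.Icc (1 : ℤ) n).filter
        (fun p => p.1 < p.2 ∧ f p.2 < f p.1)).card =
      ((Finset.Icc (1 : ℤ) n ×ˢ Finset.Icc (1 : ℤ) n).filter
        (fun p => p.1 < p.2 ∧
          f (affineTranspose n r s (affineTranspose n j r p.2)) <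
            f (affineTranspose n r s (affineTranspose n j r p.1)))).card ∧
    ∃ a : ℤ, 1 ≤ a ∧ a ≤ n ∧
      (∀ p : ℤ, 1 ≤ p → p < a →
        f (affineTranspose n r s (affineTranspose n j r p)) = f p) ∧
      f a < f (affineTranspose n r s (affineTranspose n j r a)) := by
  have hj : j ∈ Icc 1 (n : ℤ) := mem_Icc.mpr ⟨h1, by omega⟩
  have hr : r ∈ Icc 1 (n : ℤ) := mem_Icc.mpr ⟨by omega, by omega⟩
  have hs : s ∈ Icc 1 (n : ℤ) := mem_Icc.mpr ⟨by omega, h4⟩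
  have hg := fun q (hq : q ∈ Icc 1 (n : ℤ)) =>
    affineTranspose_affineTranspose_eq_swap_swap hj hr hs hq
  set w := f ∘ swap r s
  have hw : Set.InjOn w (Icc 1 (n : ℤ)) := (f.injective.comp (swap r s).injective).injOn
  have hf_inv : #(inversions (Icc 1 (n : ℤ)) f) = #(inversions (Icc 1 (n : ℤ)) w) + 1 := by
    rw [← card_inversions_comp_swap hr hs h3 (by simpa [w] using hv.2) hw]
    · simp [w, Function.comp_def]
    · intro c _ hrc hcs
      simpa [w, swap_apply_of_ne_of_ne hrc.ne' hcs.ne] using fun h h' => hgap2 ⟨c, hrc, hcs, h, h'⟩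
  have hg_inv : #(inversions (Icc 1 (n : ℤ)) (w ∘ swap j r)) =
      #(inversions (Icc 1 (n : ℤ)) w) + 1 := by
    have hwj : swap r s j = j := swap_apply_of_ne_of_ne h2.ne (h2.trans h3).ne
    refine card_inversions_comp_swap hj hr h2 (by simpa [w, hwj] using hv.1) hw
      fun c _ hjc hcr => ?_
    simpa [w, hwj, swap_apply_of_ne_of_ne hcr.ne (hcr.trans h3).ne]
      using fun h h' => hgap1 ⟨c, hjc, hcr, h, h'⟩
  refine ⟨?_, j, h1, by omega, fun p hp1 hpj => ?_, ?_⟩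
  · change #(inversions _ f) = #(inversions _ fun q => f (affineTranspose n r s _))
    rw [inversions_congr fun q hq => congrArg f (hg q hq), hf_inv]
    exact hg_inv.symm
  · rw [hg p (mem_Icc.mpr ⟨hp1, by omega⟩), swap_apply_of_ne_of_ne hpj.ne (hpj.trans h2).ne,
      swap_apply_of_ne_of_ne (hpj.trans h2).ne (hpj.trans (h2.trans h3)).ne]
  · rw [hg j hj, swap_apply_left, swap_apply_left]
    exact hv.1

/-- Let `f` be an affine permutation of quasi-period `n ≥ 3`, and
`1 ≤ j < r < s ≤ n` with `f j < f s < f r`, no `p` with `j < p < r` and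
`f j < f p < f s`, and no `p` with `r < p < s` and `f s < f p < f r`. Let
`g = f ∘ t_{rs} ∘ t_{jr}`. Then the words `(f 1, …, f n)` and `(g 1, …, g n)`
have the same number of inversions, and the latter is lexicographically
greater. -/
theorem stmt19 (n : ℕ) (hn : 3 ≤ n) (f : ℤ ≃ ℤ)
    (hf : ∀ i : ℤ, f (i + n) = f i + n)
    (j r s : ℤ) (h1 : 1 ≤ j) (h2 : j < r) (h3 : r < s) (h4 : s ≤ n)
    (hv : f j < f s ∧ f s < f r)
    (hgap1 : ¬ ∃ p : ℤ, j < p ∧ p < r ∧ f j < f p ∧ f p < f s)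
    (hgap2 : ¬ ∃ p : ℤ, r < p ∧ p < s ∧ f s < f p ∧ f p < f r) :
    ((Finset.Icc (1 : ℤ) n ×ˢ Finset.Icc (1 : ℤ) n).filter
        (fun p => p.1 < p.2 ∧ f p.2 < f p.1)).card =
      ((Finset.Icc (1 : ℤ) n ×ˢ Finset.Icc (1 : ℤ) n).filter
        (fun p => p.1 < p.2 ∧
          f (affineTranspose n r s (affineTranspose n j r p.2)) <
            f (affineTranspose n r s (affineTranspose n j r p.1)))).card ∧
    ∃ a : ℤ, 1 ≤ a ∧ a ≤ n ∧
      (∀ p : ℤ, 1 ≤ p → p < a →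
        f (affineTranspose n r s (affineTranspose n j r p)) = f p) ∧
      f a < f (affineTranspose n r s (affineTranspose n j r a)) :=
  stmt19_general n f j r s h1 h2 h3 h4 hv hgap1 hgap2
end
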